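/- arXiv:2602.22910 — 9 statements merged into one kernel-verified Lean document; each statement's English description precedes it below -/
import Mathlib

section
/- For every n ≥ 2, every p ≥ 2 and every probability measure μ on the unit sphere S^{n-1} ⊂ ℝ^n with zero barycenter, one has J_p(μ) ≥ 2^{p/2}. -/
open MeasureTheory Metric
open scoped ENNReal RealInnerProductSpace

/-- The oscillation energy `J_p(μ) = ∬ ‖v - w‖^p dμ(v) dμ(w)` for a measure `μ`
on the unit sphere `S^{n-1} ⊂ ℝ^n`. -/
noncomputable def Jp (n : ℕ) (p : ℝ)
    (μ : Measure (sphere (0 : EuclideanSpace ℝ (Fin n)) 1)) : ℝ :=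
  ∫ v, ∫ w, ‖(v : EuclideanSpace ℝ (Fin n)) - (w : EuclideanSpace ℝ (Fin n))‖ ^ p ∂μ ∂μ

theorem stmt2 (n : ℕ) (hn : 2 ≤ n) (p : ℝ) (hp : 2 ≤ p)
    (μ : Measure (sphere (0 : EuclideanSpace ℝ (Fin n)) 1)) [IsProbabilityMeasure μ]
    (hbary : (∫ v, (v : EuclideanSpace ℝ (Fin n)) ∂μ) = 0) :
    2 ^ (p / 2) ≤ Jp n p μ := by
  have hp0 : (0:ℝ) ≤ p := by linarith
  set q : ℝ := p / 2 with hq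
  have hq1 : 1 ≤ q := by rw [hq]; linarith
  set c : ℝ := q * 2 ^ (q - 1) with hc
  have hcoe : Integrable (fun w : sphere (0 : EuclideanSpace ℝ (Fin n)) 1 =>
      (w : EuclideanSpace ℝ (Fin n))) μ := by
    refine ⟨continuous_subtype_val.aestronglyMeasurable, ?_⟩
    apply HasFiniteIntegral.of_bounded (C := 1)
    filter_upwards with w
    simp [mem_sphere_zero_iff_norm.mp w.2]
  -- pointwise key inequality
  have key : ∀ v w : sphere (0 : EuclideanSpace ℝ (Fin n)) 1,
      (2:ℝ) ^ q - 2 * c * ⟪(v : EuclideanSpace ℝ (Fin n)), (w : EuclideanSpace ℝ (Fin n))⟫ ≤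
        ‖(v : EuclideanSpace ℝ (Fin n)) - (w : EuclideanSpace ℝ (Fin n))‖ ^ p := by
    intro v w
    set x : EuclideanSpace ℝ (Fin n) := (v : EuclideanSpace ℝ (Fin n)) with hx
    set y : EuclideanSpace ℝ (Fin n) := (w : EuclideanSpace ℝ (Fin n)) with hy
    set t : ℝ := ‖x - y‖ ^ (2:ℕ) with htdef
    have ht0 : 0 ≤ t := by positivity
    have hip : t = 2 - 2 * ⟪x, y⟫ := by
      rw [htdef, norm_sub_sq_real, mem_sphere_zero_iff_norm.mp v.2,
        mem_sphere_zero_iff_norm.mp w.2]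
      ring
    have h2q : ((2:ℕ):ℝ) * q = p := by push_cast; rw [hq]; ring
    have hpow : ‖x - y‖ ^ p = t ^ q := by
      rw [htdef, ← Real.rpow_natCast ‖x - y‖ 2, ← Real.rpow_mul (norm_nonneg _), h2q]
    have hxb : (-1:ℝ) ≤ t / 2 - 1 := by linarith
    have hb := one_add_mul_self_le_rpow_one_add hxb hq1
    have h12 : (1:ℝ) + (t/2 - 1) = t/2 := by ring
    rw [h12] at hb
    have hmul : (t/2) ^ q * 2 ^ q = t ^ q := by
      rw [← Real.mul_rpow (by linarith) (by norm_num), div_mul_cancel₀ _ (two_ne_zero)]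
    have h2 : (2:ℝ) ^ q = 2 ^ (q-1) * 2 := by
      rw [← Real.rpow_add_one two_ne_zero (q-1)]; ring_nf
    have hle : (1 + q * (t/2 - 1)) * 2 ^ q ≤ t ^ q := by
      rw [← hmul]
      exact mul_le_mul_of_nonneg_right hb (Real.rpow_nonneg (by norm_num) q)
    have hipe : ⟪x, y⟫ = (2 - t)/2 := by linarith
    rw [hpow, hc]
    calc (2:ℝ) ^ q - 2 * (q * 2 ^ (q-1)) * ⟪x, y⟫ = (1 + q * (t/2 - 1)) * 2 ^ q := by
          rw [hipe, h2]; ring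
      _ ≤ t ^ q := hle
  have hfcont : ∀ v : sphere (0 : EuclideanSpace ℝ (Fin n)) 1,
      Continuous (fun w : sphere (0 : EuclideanSpace ℝ (Fin n)) 1 =>
        ‖(v : EuclideanSpace ℝ (Fin n)) - (w : EuclideanSpace ℝ (Fin n))‖ ^ p) := fun v =>
    ((continuous_const.sub continuous_subtype_val).norm).rpow_const fun _ => Or.inr hp0
  have hbound : ∀ v w : sphere (0 : EuclideanSpace ℝ (Fin n)) 1,
      ‖(v : EuclideanSpace ℝ (Fin n)) - (w : EuclideanSpace ℝ (Fin n))‖ ^ p ≤ 2 ^ p := by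
    intro v w
    apply Real.rpow_le_rpow (norm_nonneg _) ?_ hp0
    calc ‖(v : EuclideanSpace ℝ (Fin n)) - (w : EuclideanSpace ℝ (Fin n))‖
        ≤ ‖(v : EuclideanSpace ℝ (Fin n))‖ + ‖(w : EuclideanSpace ℝ (Fin n))‖ := norm_sub_le _ _
      _ = 2 := by
          rw [mem_sphere_zero_iff_norm.mp v.2, mem_sphere_zero_iff_norm.mp w.2]; norm_num
  have hfint : ∀ v : sphere (0 : EuclideanSpace ℝ (Fin n)) 1,
      Integrable (fun w : sphere (0 : EuclideanSpace ℝ (Fin n)) 1 =>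
        ‖(v : EuclideanSpace ℝ (Fin n)) - (w : EuclideanSpace ℝ (Fin n))‖ ^ p) μ := by
    intro v
    refine ⟨(hfcont v).aestronglyMeasurable, HasFiniteIntegral.of_bounded (C := 2 ^ p) ?_⟩
    filter_upwards with w
    rw [Real.norm_eq_abs, abs_of_nonneg (Real.rpow_nonneg (norm_nonneg _) _)]
    exact hbound v w
  have hlin_int : ∀ v : sphere (0 : EuclideanSpace ℝ (Fin n)) 1,
      Integrable (fun w : sphere (0 : EuclideanSpace ℝ (Fin n)) 1 =>
        (2:ℝ) ^ q - 2 * c * ⟪(v : EuclideanSpace ℝ (Fin n)), (w : EuclideanSpace ℝ (Fin n))⟫) μ :=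
    fun v => (integrable_const _).sub ((hcoe.const_inner _).const_mul _)
  -- inner integral lower bound
  have hinner : ∀ v : sphere (0 : EuclideanSpace ℝ (Fin n)) 1,
      (2:ℝ) ^ q ≤ ∫ w, ‖(v : EuclideanSpace ℝ (Fin n)) - (w : EuclideanSpace ℝ (Fin n))‖ ^ p ∂μ := by
    intro v
    have h1 : ∫ w, ((2:ℝ) ^ q -
        2 * c * ⟪(v : EuclideanSpace ℝ (Fin n)), (w : EuclideanSpace ℝ (Fin n))⟫) ∂μ = 2 ^ q := by
      rw [integral_sub (integrable_const _) ((hcoe.const_inner _).const_mul _),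
        integral_const_mul, integral_inner hcoe, hbary, inner_zero_right]
      simp
    rw [← h1]
    exact integral_mono (hlin_int v) (hfint v) (key v)
  -- measurability and integrability of the inner integral as a function of v
  have hFmeas : StronglyMeasurable (fun z : (sphere (0 : EuclideanSpace ℝ (Fin n)) 1) ×
      (sphere (0 : EuclideanSpace ℝ (Fin n)) 1) =>
        ‖(z.1 : EuclideanSpace ℝ (Fin n)) - (z.2 : EuclideanSpace ℝ (Fin n))‖ ^ p) :=
    (((continuous_subtype_val.comp continuous_fst).sub
      (continuous_subtype_val.comp continuous_snd)).norm.rpow_const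
        fun _ => Or.inr hp0).stronglyMeasurable
  have hgint : Integrable (fun v : sphere (0 : EuclideanSpace ℝ (Fin n)) 1 =>
      ∫ w, ‖(v : EuclideanSpace ℝ (Fin n)) - (w : EuclideanSpace ℝ (Fin n))‖ ^ p ∂μ) μ := by
    refine ⟨(hFmeas.integral_prod_right').aestronglyMeasurable,
      HasFiniteIntegral.of_bounded (C := 2 ^ p) ?_⟩
    filter_upwards with v
    rw [Real.norm_eq_abs, abs_of_nonneg (integral_nonneg fun w =>
      Real.rpow_nonneg (norm_nonneg _) _)]
    calc ∫ w, ‖(v : EuclideanSpace ℝ (Fin n)) - (w : EuclideanSpace ℝ (Fin n))‖ ^ p ∂μ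
        ≤ ∫ _w, (2:ℝ) ^ p ∂μ := integral_mono (hfint v) (integrable_const _) (hbound v)
      _ = 2 ^ p := by simp
  -- conclude
  have hfinal : (2:ℝ) ^ q ≤ Jp n p μ := by
    have h0 : ∫ _v, (2:ℝ) ^ q ∂μ = 2 ^ q := by simp
    rw [Jp, ← h0]
    exact integral_mono (integrable_const _) hgint hinner
  rw [← hq] at *
  exact hfinal
end

section
/- For every n ≥ 2, every 0 < p < 2 and every probability measure μ on the unit sphere S^{n-1} ⊂ ℝ^n with zero barycenter, one has J_p(μ) ≥ 2^{p-1}. -/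
open MeasureTheory Metric
open scoped ENNReal RealInnerProductSpace

lemma key_pointwise {p : ℝ} (hp0 : 0 < p) (hp2 : p < 2) {t : ℝ} (ht0 : 0 ≤ t) (ht2 : t ≤ 2) :
    (2 : ℝ) ^ (p - 2) * t ^ 2 ≤ t ^ p := by
  rcases eq_or_lt_of_le ht0 with h | h
  · rw [← h, Real.zero_rpow hp0.ne']
    simp
  · have h1 : (2 : ℝ) ^ (p - 2) ≤ t ^ (p - 2) :=
      Real.rpow_le_rpow_of_nonpos h ht2 (by linarith)
    have h2 : t ^ p = t ^ (p - 2) * t ^ 2 := by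
      rw [← Real.rpow_two, ← Real.rpow_add h]
      ring_nf
    rw [h2]
    exact mul_le_mul_of_nonneg_right h1 (sq_nonneg t)

theorem stmt3 (n : ℕ) (hn : 2 ≤ n) (p : ℝ) (hp0 : 0 < p) (hp2 : p < 2)
    (μ : Measure (sphere (0 : EuclideanSpace ℝ (Fin n)) 1)) [IsProbabilityMeasure μ]
    (hbary : (∫ v, (v : EuclideanSpace ℝ (Fin n)) ∂μ) = 0) :
    2 ^ (p - 1) ≤ Jp n p μ := by
  have hcpos : (0:ℝ) < (2 : ℝ) ^ (p - 2) := Real.rpow_pos_of_pos two_pos _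
  -- pointwise inequality
  have hpt : ∀ v w : sphere (0 : EuclideanSpace ℝ (Fin n)) 1,
      (2 : ℝ) ^ (p - 2) * (2 - 2 * ⟪(v : EuclideanSpace ℝ (Fin n)), (w : EuclideanSpace ℝ (Fin n))⟫)
        ≤ ‖(v : EuclideanSpace ℝ (Fin n)) - (w : EuclideanSpace ℝ (Fin n))‖ ^ p := by
    intro v w
    have hv : ‖(v : EuclideanSpace ℝ (Fin n))‖ = 1 := by
      simpa using mem_sphere_zero_iff_norm.mp v.2
    have hw : ‖(w : EuclideanSpace ℝ (Fin n))‖ = 1 := by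
      simpa using mem_sphere_zero_iff_norm.mp w.2
    have hsq : ‖(v : EuclideanSpace ℝ (Fin n)) - (w : EuclideanSpace ℝ (Fin n))‖ ^ 2
        = 2 - 2 * ⟪(v : EuclideanSpace ℝ (Fin n)), (w : EuclideanSpace ℝ (Fin n))⟫ := by
      rw [norm_sub_sq_real, hv, hw]; ring
    have ht2 : ‖(v : EuclideanSpace ℝ (Fin n)) - (w : EuclideanSpace ℝ (Fin n))‖ ≤ 2 := by
      calc ‖(v : EuclideanSpace ℝ (Fin n)) - (w : EuclideanSpace ℝ (Fin n))‖
          ≤ ‖(v : EuclideanSpace ℝ (Fin n))‖ + ‖(w : EuclideanSpace ℝ (Fin n))‖ := norm_sub_le _ _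
        _ = 2 := by rw [hv, hw]; norm_num
    have := key_pointwise hp0 hp2 (norm_nonneg _) ht2
    rwa [hsq] at this
  have hint_f : ∀ v : sphere (0 : EuclideanSpace ℝ (Fin n)) 1,
      Integrable (fun w : sphere (0 : EuclideanSpace ℝ (Fin n)) 1 =>
        ‖(v : EuclideanSpace ℝ (Fin n)) - (w : EuclideanSpace ℝ (Fin n))‖ ^ p) μ := by
    intro v
    have hcont : Continuous fun w : sphere (0 : EuclideanSpace ℝ (Fin n)) 1 =>
        ‖(v : EuclideanSpace ℝ (Fin n)) - (w : EuclideanSpace ℝ (Fin n))‖ ^ p := by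
      apply Continuous.rpow_const
      · exact (continuous_const.sub continuous_subtype_val).norm
      · exact fun _ => Or.inr hp0.le
    exact hcont.integrable_of_hasCompactSupport (HasCompactSupport.of_compactSpace _)
  have hint_coe : Integrable (fun w : sphere (0 : EuclideanSpace ℝ (Fin n)) 1 =>
      (w : EuclideanSpace ℝ (Fin n))) μ :=
    continuous_subtype_val.integrable_of_hasCompactSupport (HasCompactSupport.of_compactSpace _)
  have hint_inner : ∀ v : sphere (0 : EuclideanSpace ℝ (Fin n)) 1,
      Integrable (fun w : sphere (0 : EuclideanSpace ℝ (Fin n)) 1 =>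
        ⟪(v : EuclideanSpace ℝ (Fin n)), (w : EuclideanSpace ℝ (Fin n))⟫) μ := by
    intro v
    have : Continuous fun w : sphere (0 : EuclideanSpace ℝ (Fin n)) 1 =>
        ⟪(v : EuclideanSpace ℝ (Fin n)), (w : EuclideanSpace ℝ (Fin n))⟫ :=
      continuous_const.inner continuous_subtype_val
    exact this.integrable_of_hasCompactSupport (HasCompactSupport.of_compactSpace _)
  -- inner integral lower bound
  have hinner : ∀ v : sphere (0 : EuclideanSpace ℝ (Fin n)) 1,
      2 * (2 : ℝ) ^ (p - 2) ≤ ∫ w, ‖(v : EuclideanSpace ℝ (Fin n)) - (w : EuclideanSpace ℝ (Fin n))‖ ^ p ∂μ := by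
    intro v
    have hg_int : Integrable (fun w : sphere (0 : EuclideanSpace ℝ (Fin n)) 1 =>
        (2 : ℝ) ^ (p - 2) * (2 - 2 * ⟪(v : EuclideanSpace ℝ (Fin n)), (w : EuclideanSpace ℝ (Fin n))⟫)) μ :=
      (((integrable_const (2:ℝ)).sub ((hint_inner v).const_mul 2)).const_mul _)
    have h1 := integral_mono hg_int (hint_f v) (fun w => hpt v w)
    have h2 : ∫ w, (2 : ℝ) ^ (p - 2) *
        (2 - 2 * ⟪(v : EuclideanSpace ℝ (Fin n)), (w : EuclideanSpace ℝ (Fin n))⟫) ∂μ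
        = 2 * (2 : ℝ) ^ (p - 2) := by
      rw [integral_const_mul, integral_sub (integrable_const _) ((hint_inner v).const_mul 2),
        integral_const_mul, integral_inner hint_coe, hbary, inner_zero_right]
      simp [mul_comm]
    linarith [h1, h2.symm.le]
  -- outer integral
  have houter : 2 * (2 : ℝ) ^ (p - 2) ≤ Jp n p μ := by
    have h1 : ∫ (_ : sphere (0 : EuclideanSpace ℝ (Fin n)) 1), (2 * (2 : ℝ) ^ (p - 2)) ∂μ
        ≤ ∫ v, ∫ w, ‖(v : EuclideanSpace ℝ (Fin n)) - (w : EuclideanSpace ℝ (Fin n))‖ ^ p ∂μ ∂μ := by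
      apply integral_mono_of_nonneg
      · exact Filter.Eventually.of_forall fun _ => by positivity
      · have hFcont : Continuous fun v : sphere (0 : EuclideanSpace ℝ (Fin n)) 1 =>
            ∫ w, ‖(v : EuclideanSpace ℝ (Fin n)) - (w : EuclideanSpace ℝ (Fin n))‖ ^ p ∂μ := by
          apply continuous_of_dominated (bound := fun _ => (2:ℝ) ^ p)
          · exact fun v => (hint_f v).aestronglyMeasurable
          · intro v
            refine Filter.Eventually.of_forall fun w => ?_
            have hv : ‖(v : EuclideanSpace ℝ (Fin n))‖ = 1 := by
              simpa using mem_sphere_zero_iff_norm.mp v.2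
            have hw : ‖(w : EuclideanSpace ℝ (Fin n))‖ = 1 := by
              simpa using mem_sphere_zero_iff_norm.mp w.2
            have ht2 : ‖(v : EuclideanSpace ℝ (Fin n)) - (w : EuclideanSpace ℝ (Fin n))‖ ≤ 2 := by
              calc ‖(v : EuclideanSpace ℝ (Fin n)) - (w : EuclideanSpace ℝ (Fin n))‖
                  ≤ ‖(v : EuclideanSpace ℝ (Fin n))‖ + ‖(w : EuclideanSpace ℝ (Fin n))‖ :=
                    norm_sub_le _ _
                _ = 2 := by rw [hv, hw]; norm_num
            rw [Real.norm_of_nonneg (Real.rpow_nonneg (norm_nonneg _) _)]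
            exact Real.rpow_le_rpow (norm_nonneg _) ht2 hp0.le
          · exact integrable_const _
          · refine Filter.Eventually.of_forall fun w => ?_
            apply Continuous.rpow_const
            · exact (continuous_subtype_val.sub continuous_const).norm
            · exact fun _ => Or.inr hp0.le
        exact hFcont.integrable_of_hasCompactSupport (HasCompactSupport.of_compactSpace _)
      · exact Filter.Eventually.of_forall hinner
    simpa [Jp, measure_univ] using h1
  have hfinal : (2 : ℝ) ^ (p - 1) = 2 * (2 : ℝ) ^ (p - 2) := by
    rw [show p - 1 = 1 + (p - 2) by ring, Real.rpow_add two_pos, Real.rpow_one]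
  linarith
end

section
/- Let n ≥ 2 and 0 < p < 2, and let μ be a probability measure on the unit sphere S^{n-1} ⊂ ℝ^n with zero barycenter. Then J_p(μ) = 2^{p-1} if and only if there exists v ∈ S^{n-1} such that μ = (1/2)(δ_v + δ_{-v}), where δ_w denotes the Dirac measure at w. -/
open MeasureTheory Metric
open scoped ENNReal
open scoped RealInnerProductSpace

set_option maxHeartbeats 1000000

lemma aux_ineq {p s : ℝ} (hp0 : 0 < p) (hp2 : p < 2) (hs0 : 0 ≤ s) (hs2 : s ≤ 2) :
    2 ^ (p - 2) * s ^ 2 ≤ s ^ p := by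
  rcases eq_or_lt_of_le hs0 with h | h
  · simp [← h, Real.zero_rpow hp0.ne']
  · have h1 : s ^ p = s ^ (p - 2) * s ^ 2 := by
      rw [← Real.rpow_natCast s 2, ← Real.rpow_add h]
      norm_num
    rw [h1]
    exact mul_le_mul_of_nonneg_right
      (Real.rpow_le_rpow_of_nonpos h hs2 (by linarith)) (sq_nonneg s)

lemma aux_eq {p s : ℝ} (hp0 : 0 < p) (hp2 : p < 2) (hs0 : 0 ≤ s) (hs2 : s ≤ 2)
    (heq : s ^ p - 2 ^ (p - 2) * s ^ 2 = 0) : s = 0 ∨ s = 2 := by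
  by_contra hcon
  push_neg at hcon
  have h : 0 < s := lt_of_le_of_ne hs0 (Ne.symm hcon.1)
  have h2 : s < 2 := lt_of_le_of_ne hs2 hcon.2
  have h3 : 2 ^ (p - 2) < s ^ (p - 2) := Real.rpow_lt_rpow_of_neg h h2 (by linarith)
  have h1 : s ^ p = s ^ (p - 2) * s ^ 2 := by
    rw [← Real.rpow_natCast s 2, ← Real.rpow_add h]
    norm_num
  nlinarith [pow_pos h 2]

lemma aux_antipodal {F : Type*} [NormedAddCommGroup F] [InnerProductSpace ℝ F]
    {v w : F} (hv : ‖v‖ = 1) (hw : ‖w‖ = 1) (h : ‖v - w‖ = 2) : w = -v := by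
  have h2 : ‖v - w‖ ^ 2 = ‖v‖ ^ 2 - 2 * ⟪v, w⟫ + ‖w‖ ^ 2 := norm_sub_sq_real v w
  rw [h, hv, hw] at h2
  have hinner : ⟪v, -w⟫ = 1 := by
    rw [inner_neg_right]; nlinarith
  have hvw := (inner_eq_one_iff_of_norm_eq_one hv (by rw [norm_neg, hw])).mp hinner
  rw [hvw, neg_neg]

lemma integrable_cont {X : Type*} {Y : Type*} [MeasurableSpace X] [TopologicalSpace X]
    [OpensMeasurableSpace X] [T2Space X] [CompactSpace X] [NormedAddCommGroup Y]
    (ν : Measure X) [IsFiniteMeasure ν] {f : X → Y} (hf : Continuous f) :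
    Integrable f ν :=
  hf.integrable_of_hasCompactSupport (HasCompactSupport.of_compactSpace f)


theorem stmt4 (n : ℕ) (hn : 2 ≤ n) (p : ℝ) (hp0 : 0 < p) (hp2 : p < 2)
    (μ : Measure (sphere (0 : EuclideanSpace ℝ (Fin n)) 1)) [IsProbabilityMeasure μ]
    (hbary : (∫ v, (v : EuclideanSpace ℝ (Fin n)) ∂μ) = 0) :
    Jp n p μ = 2 ^ (p - 1) ↔
      ∃ v : sphere (0 : EuclideanSpace ℝ (Fin n)) 1,
        μ = (2 : ℝ≥0∞)⁻¹ • (Measure.dirac v + Measure.dirac (-v)) := by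
  constructor
  · intro hJ'
    have hJ : (∫ v, ∫ w, ‖(v : EuclideanSpace ℝ (Fin n)) - (w : EuclideanSpace ℝ (Fin n))‖ ^ p
        ∂μ ∂μ) = 2 ^ (p - 1) := hJ'
    clear hJ'
    have hconte : Continuous fun z : sphere (0 : EuclideanSpace ℝ (Fin n)) 1 ×
        sphere (0 : EuclideanSpace ℝ (Fin n)) 1 =>
        ‖(z.1 : EuclideanSpace ℝ (Fin n)) - (z.2 : EuclideanSpace ℝ (Fin n))‖ :=
      ((continuous_subtype_val.comp continuous_fst).sub
        (continuous_subtype_val.comp continuous_snd)).norm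
    have hintw : Integrable (fun w : sphere (0 : EuclideanSpace ℝ (Fin n)) 1 =>
        (w : EuclideanSpace ℝ (Fin n))) μ := integrable_cont μ continuous_subtype_val
    have hb : ∀ v w : sphere (0 : EuclideanSpace ℝ (Fin n)) 1,
        ‖(v : EuclideanSpace ℝ (Fin n)) - (w : EuclideanSpace ℝ (Fin n))‖ ≤ 2 := by
      intro v w
      calc ‖(v : EuclideanSpace ℝ (Fin n)) - (w : EuclideanSpace ℝ (Fin n))‖
          ≤ ‖(v : EuclideanSpace ℝ (Fin n))‖ + ‖(w : EuclideanSpace ℝ (Fin n))‖ := norm_sub_le _ _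
        _ = 2 := by rw [norm_eq_of_mem_sphere, norm_eq_of_mem_sphere]; norm_num
    -- inner integral of squared norm is 2
    have hsq : ∀ v : sphere (0 : EuclideanSpace ℝ (Fin n)) 1,
        (∫ w, ‖(v : EuclideanSpace ℝ (Fin n)) - (w : EuclideanSpace ℝ (Fin n))‖ ^ 2 ∂μ) = 2 := by
      intro v
      have heq : (fun w : sphere (0 : EuclideanSpace ℝ (Fin n)) 1 =>
          ‖(v : EuclideanSpace ℝ (Fin n)) - (w : EuclideanSpace ℝ (Fin n))‖ ^ 2)
          = fun w : sphere (0 : EuclideanSpace ℝ (Fin n)) 1 =>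
            2 - 2 * ⟪(v : EuclideanSpace ℝ (Fin n)), (w : EuclideanSpace ℝ (Fin n))⟫ := by
        funext w
        rw [norm_sub_sq_real, norm_eq_of_mem_sphere, norm_eq_of_mem_sphere]
        ring
      have hinner0 : (∫ w, ⟪(v : EuclideanSpace ℝ (Fin n)), (w : EuclideanSpace ℝ (Fin n))⟫ ∂μ)
          = 0 := by
        have h := (innerSL ℝ ((v : EuclideanSpace ℝ (Fin n)))).integral_comp_comm hintw
        simpa [hbary] using h
      rw [heq, integral_sub (integrable_const _)
        ((integrable_cont μ (continuous_const.inner continuous_subtype_val)).const_mul 2),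
        integral_const_mul, hinner0, integral_const]
      simp
    -- product-measure versions
    have hcontp : Continuous fun z : sphere (0 : EuclideanSpace ℝ (Fin n)) 1 ×
        sphere (0 : EuclideanSpace ℝ (Fin n)) 1 =>
        ‖(z.1 : EuclideanSpace ℝ (Fin n)) - (z.2 : EuclideanSpace ℝ (Fin n))‖ ^ p :=
      hconte.rpow_const fun _ => Or.inr hp0.le
    have hint1 : Integrable (fun z : sphere (0 : EuclideanSpace ℝ (Fin n)) 1 ×
        sphere (0 : EuclideanSpace ℝ (Fin n)) 1 =>
        ‖(z.1 : EuclideanSpace ℝ (Fin n)) - (z.2 : EuclideanSpace ℝ (Fin n))‖ ^ p) (μ.prod μ) :=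
      integrable_cont _ hcontp
    have hint2 : Integrable (fun z : sphere (0 : EuclideanSpace ℝ (Fin n)) 1 ×
        sphere (0 : EuclideanSpace ℝ (Fin n)) 1 =>
        ‖(z.1 : EuclideanSpace ℝ (Fin n)) - (z.2 : EuclideanSpace ℝ (Fin n))‖ ^ 2) (μ.prod μ) :=
      integrable_cont _ (hconte.pow 2)
    have hJprod : (∫ z : sphere (0 : EuclideanSpace ℝ (Fin n)) 1 ×
        sphere (0 : EuclideanSpace ℝ (Fin n)) 1,
        ‖(z.1 : EuclideanSpace ℝ (Fin n)) - (z.2 : EuclideanSpace ℝ (Fin n))‖ ^ p ∂(μ.prod μ))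
        = 2 ^ (p - 1) := by
      rw [MeasureTheory.integral_prod _ hint1]
      exact hJ
    have hsqprod : (∫ z : sphere (0 : EuclideanSpace ℝ (Fin n)) 1 ×
        sphere (0 : EuclideanSpace ℝ (Fin n)) 1,
        ‖(z.1 : EuclideanSpace ℝ (Fin n)) - (z.2 : EuclideanSpace ℝ (Fin n))‖ ^ 2 ∂(μ.prod μ))
        = 2 := by
      rw [MeasureTheory.integral_prod _ hint2]
      simp only [hsq]
      simp
    have hg0 : (∫ z : sphere (0 : EuclideanSpace ℝ (Fin n)) 1 ×
        sphere (0 : EuclideanSpace ℝ (Fin n)) 1,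
        (‖(z.1 : EuclideanSpace ℝ (Fin n)) - (z.2 : EuclideanSpace ℝ (Fin n))‖ ^ p
          - 2 ^ (p - 2) * ‖(z.1 : EuclideanSpace ℝ (Fin n)) - (z.2 : EuclideanSpace ℝ (Fin n))‖ ^ 2)
        ∂(μ.prod μ)) = 0 := by
      rw [integral_sub hint1 (hint2.const_mul _), integral_const_mul, hJprod, hsqprod,
        show p - 1 = (p - 2) + 1 by ring, Real.rpow_add (by norm_num : (0:ℝ) < 2), Real.rpow_one]
      ring
    have hae : ∀ᵐ z ∂(μ.prod μ),
        (‖((z : sphere (0 : EuclideanSpace ℝ (Fin n)) 1 ×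
          sphere (0 : EuclideanSpace ℝ (Fin n)) 1).1 : EuclideanSpace ℝ (Fin n))
          - (z.2 : EuclideanSpace ℝ (Fin n))‖ ^ p
          - 2 ^ (p - 2) * ‖(z.1 : EuclideanSpace ℝ (Fin n)) - (z.2 : EuclideanSpace ℝ (Fin n))‖ ^ 2)
          = 0 := by
      have hnn : 0 ≤ fun z : sphere (0 : EuclideanSpace ℝ (Fin n)) 1 ×
          sphere (0 : EuclideanSpace ℝ (Fin n)) 1 =>
          (‖(z.1 : EuclideanSpace ℝ (Fin n)) - (z.2 : EuclideanSpace ℝ (Fin n))‖ ^ p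
          - 2 ^ (p - 2) * ‖(z.1 : EuclideanSpace ℝ (Fin n)) - (z.2 : EuclideanSpace ℝ (Fin n))‖ ^ 2) := by
        intro z
        have := aux_ineq hp0 hp2 (norm_nonneg ((z.1 : EuclideanSpace ℝ (Fin n)) - z.2)) (hb z.1 z.2)
        simp only [Pi.zero_apply]
        linarith
      exact (integral_eq_zero_iff_of_nonneg hnn (hint1.sub (hint2.const_mul _))).mp hg0
    have hae2 : ∀ᵐ z : sphere (0 : EuclideanSpace ℝ (Fin n)) 1 ×
        sphere (0 : EuclideanSpace ℝ (Fin n)) 1 ∂(μ.prod μ), z.2 = z.1 ∨ z.2 = -z.1 := by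
      filter_upwards [hae] with z hz
      rcases aux_eq hp0 hp2 (norm_nonneg _) (hb z.1 z.2) hz with h0 | h2
      · left
        have : (z.1 : EuclideanSpace ℝ (Fin n)) = z.2 := by
          rw [← sub_eq_zero]; exact norm_eq_zero.mp h0
        exact Subtype.ext this.symm
      · right
        refine Subtype.ext ?_
        rw [coe_neg_sphere]
        exact aux_antipodal (norm_eq_of_mem_sphere _) (norm_eq_of_mem_sphere _) h2
    have hae3 := Measure.ae_ae_of_ae_prod hae2
    haveI : (ae μ).NeBot := ae_neBot.mpr (IsProbabilityMeasure.ne_zero μ)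
    obtain ⟨v₀, hv₀⟩ := hae3.exists
    refine ⟨v₀, ?_⟩
    -- basic facts about v₀
    have hne : v₀ ≠ -v₀ := by
      intro h
      have hc : (v₀ : EuclideanSpace ℝ (Fin n)) = -(v₀ : EuclideanSpace ℝ (Fin n)) := by
        rw [← coe_neg_sphere, ← h]
      have hc2 : (2 : ℝ) • (v₀ : EuclideanSpace ℝ (Fin n)) = 0 := by
        rw [two_smul]
        exact eq_neg_iff_add_eq_zero.mp hc
      rcases smul_eq_zero.mp hc2 with h2 | h2
      · norm_num at h2
      · have hnorm := norm_eq_of_mem_sphere v₀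
        rw [h2] at hnorm
        simp at hnorm
    have hTc : μ ({v₀, -v₀} : Set (sphere (0 : EuclideanSpace ℝ (Fin n)) 1))ᶜ = 0 := by
      have h' : ∀ᵐ w ∂μ, w ∈ ({v₀, -v₀} : Set (sphere (0 : EuclideanSpace ℝ (Fin n)) 1)) := by
        filter_upwards [hv₀] with w hw
        simpa [Set.mem_insert_iff] using hw
      exact ae_iff.mp h'
    have hTmeas : MeasurableSet ({v₀, -v₀} : Set (sphere (0 : EuclideanSpace ℝ (Fin n)) 1)) :=
      ((Set.finite_singleton _).insert _).measurableSet
    have hdisj : Disjoint ({v₀} : Set (sphere (0 : EuclideanSpace ℝ (Fin n)) 1)) {-v₀} :=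
      Set.disjoint_singleton.mpr hne
    have hsum : μ {v₀} + μ {-v₀} = 1 := by
      have h1 : μ ({v₀, -v₀} : Set (sphere (0 : EuclideanSpace ℝ (Fin n)) 1)) = 1 := by
        have := measure_add_measure_compl (μ := μ) hTmeas
        rw [hTc, add_zero] at this
        rw [this, measure_univ]
      rw [← h1, Set.insert_eq, measure_union (hdisj.mono_left (by rfl)) (measurableSet_singleton _)]
    -- decomposition
    have hdecomp : μ = μ {v₀} • Measure.dirac v₀ + μ {-v₀} • Measure.dirac (-v₀) := by
      ext s hs
      have h0 : μ (s \ ({v₀, -v₀} : Set (sphere (0 : EuclideanSpace ℝ (Fin n)) 1))) = 0 :=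
        measure_mono_null (fun x hx => hx.2) hTc
      have h1 : μ s = μ (s ∩ ({v₀, -v₀} : Set (sphere (0 : EuclideanSpace ℝ (Fin n)) 1))) := by
        rw [← measure_inter_add_diff s hTmeas, h0, add_zero]
      have hins : s ∩ ({v₀, -v₀} : Set (sphere (0 : EuclideanSpace ℝ (Fin n)) 1))
          = (s ∩ {v₀}) ∪ (s ∩ {-v₀}) := by
        rw [Set.insert_eq, Set.inter_union_distrib_left]
      rw [h1, hins, measure_union (hdisj.mono Set.inter_subset_right Set.inter_subset_right)
        (hs.inter (measurableSet_singleton _)),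
        Measure.add_apply, Measure.smul_apply, Measure.smul_apply,
        Measure.dirac_apply' _ hs, Measure.dirac_apply' _ hs]
      congr 1
      · by_cases h : v₀ ∈ s
        · rw [Set.inter_eq_right.mpr (Set.singleton_subset_iff.mpr h), Set.indicator_of_mem h]
          simp
        · rw [Set.inter_singleton_eq_empty.mpr h, Set.indicator_of_notMem h]
          simp
      · by_cases h : -v₀ ∈ s
        · rw [Set.inter_eq_right.mpr (Set.singleton_subset_iff.mpr h), Set.indicator_of_mem h]
          simp
        · rw [Set.inter_singleton_eq_empty.mpr h, Set.indicator_of_notMem h]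
          simp
    -- barycenter forces equal masses
    have hbary2 : (μ {v₀}).toReal • (v₀ : EuclideanSpace ℝ (Fin n))
        + (μ {-v₀}).toReal • ((-v₀ : sphere (0 : EuclideanSpace ℝ (Fin n)) 1) : EuclideanSpace ℝ (Fin n)) = 0 := by
      have h := hbary
      rw [hdecomp] at h
      rwa [integral_add_measure
        ((integrable_cont _ continuous_subtype_val).smul_measure (measure_ne_top μ _))
        ((integrable_cont _ continuous_subtype_val).smul_measure (measure_ne_top μ _)),
        integral_smul_measure, integral_smul_measure, integral_dirac, integral_dirac] at h
    rw [coe_neg_sphere, smul_neg, ← sub_eq_add_neg, ← sub_smul, smul_eq_zero] at hbary2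
    have hveq : (μ {v₀}).toReal = (μ {-v₀}).toReal := by
      rcases hbary2 with h | h
      · exact sub_eq_zero.mp h
      · exfalso
        have := norm_eq_of_mem_sphere v₀
        rw [h] at this
        simp at this
    have hab : μ {v₀} = μ {-v₀} :=
      (ENNReal.toReal_eq_toReal_iff' (measure_ne_top μ _) (measure_ne_top μ _)).mp hveq
    have ha : μ {v₀} = (2 : ℝ≥0∞)⁻¹ := by
      have h2 : (2 : ℝ≥0∞) * μ {v₀} = 1 := by
        rw [two_mul]
        nth_rewrite 2 [hab]
        exact hsum
      calc μ {v₀} = (2 : ℝ≥0∞)⁻¹ * ((2 : ℝ≥0∞) * μ {v₀}) := by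
            rw [← mul_assoc, ENNReal.inv_mul_cancel (by norm_num) (by norm_num), one_mul]
        _ = (2 : ℝ≥0∞)⁻¹ := by rw [h2, mul_one]
    rw [hdecomp, ha, ← hab, ha, smul_add]

  · rintro ⟨v, rfl⟩
    show (∫ x, ∫ w, ‖(x : EuclideanSpace ℝ (Fin n)) - (w : EuclideanSpace ℝ (Fin n))‖ ^ p
        ∂((2 : ℝ≥0∞)⁻¹ • (Measure.dirac v + Measure.dirac (-v)))
        ∂((2 : ℝ≥0∞)⁻¹ • (Measure.dirac v + Measure.dirac (-v)))) = 2 ^ (p - 1)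
    have key : ∀ g : sphere (0 : EuclideanSpace ℝ (Fin n)) 1 → ℝ, Continuous g →
        (∫ x, g x ∂((2 : ℝ≥0∞)⁻¹ • (Measure.dirac v + Measure.dirac (-v))))
          = (g v + g (-v)) / 2 := by
      intro g hg
      rw [integral_smul_measure, integral_add_measure (integrable_cont _ hg) (integrable_cont _ hg),
          integral_dirac, integral_dirac]
      simp [ENNReal.toReal_inv, smul_eq_mul]
      ring
    have hcont : ∀ x : sphere (0 : EuclideanSpace ℝ (Fin n)) 1,
        Continuous fun w : sphere (0 : EuclideanSpace ℝ (Fin n)) 1 =>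
          ‖(x : EuclideanSpace ℝ (Fin n)) - (w : EuclideanSpace ℝ (Fin n))‖ ^ p := fun x =>
      ((continuous_const.sub continuous_subtype_val).norm).rpow_const fun _ => Or.inr hp0.le
    have hnvv : ‖(v : EuclideanSpace ℝ (Fin n)) - ((-v : sphere (0 : EuclideanSpace ℝ (Fin n)) 1) : EuclideanSpace ℝ (Fin n))‖ = 2 := by
      rw [coe_neg_sphere, sub_neg_eq_add, ← two_smul ℝ, norm_smul, norm_eq_of_mem_sphere]
      norm_num
    have hF : ∀ x : sphere (0 : EuclideanSpace ℝ (Fin n)) 1,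
        (∫ w, ‖(x : EuclideanSpace ℝ (Fin n)) - (w : EuclideanSpace ℝ (Fin n))‖ ^ p
          ∂((2 : ℝ≥0∞)⁻¹ • (Measure.dirac v + Measure.dirac (-v))))
        = (‖(x : EuclideanSpace ℝ (Fin n)) - (v : EuclideanSpace ℝ (Fin n))‖ ^ p
          + ‖(x : EuclideanSpace ℝ (Fin n)) + (v : EuclideanSpace ℝ (Fin n))‖ ^ p) / 2 := by
      intro x
      rw [key _ (hcont x), coe_neg_sphere, sub_neg_eq_add]
    simp only [hF]
    rw [key (fun x : sphere (0 : EuclideanSpace ℝ (Fin n)) 1 => (‖(x : EuclideanSpace ℝ (Fin n)) - (v : EuclideanSpace ℝ (Fin n))‖ ^ p + ‖(x : EuclideanSpace ℝ (Fin n)) + (v : EuclideanSpace ℝ (Fin n))‖ ^ p) / 2) ((((continuous_subtype_val.sub continuous_const).norm.rpow_const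
        fun _ => Or.inr hp0.le).add ((continuous_subtype_val.add continuous_const).norm.rpow_const
        fun _ => Or.inr hp0.le)).div_const 2)]
    have h0 : ‖(v : EuclideanSpace ℝ (Fin n)) - (v : EuclideanSpace ℝ (Fin n))‖ ^ p = 0 := by
      simp [Real.zero_rpow hp0.ne']
    have h2 : ‖(v : EuclideanSpace ℝ (Fin n)) + (v : EuclideanSpace ℝ (Fin n))‖ ^ p = 2 ^ p := by
      rw [← two_smul ℝ, norm_smul, norm_eq_of_mem_sphere]
      norm_num
    have hv2 : ((-v : sphere (0 : EuclideanSpace ℝ (Fin n)) 1) : EuclideanSpace ℝ (Fin n)) = -(v : EuclideanSpace ℝ (Fin n)) := coe_neg_sphere v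
    rw [hv2]
    have h3 : ‖-(v : EuclideanSpace ℝ (Fin n)) - (v : EuclideanSpace ℝ (Fin n))‖ ^ p = 2 ^ p := by
      rw [show -(v : EuclideanSpace ℝ (Fin n)) - (v : EuclideanSpace ℝ (Fin n)) = -((v:EuclideanSpace ℝ (Fin n)) + v) by abel, norm_neg, ← two_smul ℝ, norm_smul, norm_eq_of_mem_sphere]
      norm_num
    have h4 : ‖-(v : EuclideanSpace ℝ (Fin n)) + (v : EuclideanSpace ℝ (Fin n))‖ ^ p = 0 := by
      simp [Real.zero_rpow hp0.ne']
    rw [h0, h2, h3, h4, Real.rpow_sub (by norm_num : (0:ℝ) < 2), Real.rpow_one]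
    ring
end

section
/- Let n ≥ 2 and 0 < p < 2. Then J_p is concave on probability measures with zero barycenter: for all probability measures μ₁, μ₂ on the unit sphere S^{n-1} ⊂ ℝ^n with zero barycenter and all t ∈ [0,1], one has J_p(t μ₁ + (1−t) μ₂) ≥ t J_p(μ₁) + (1−t) J_p(μ₂). -/
open MeasureTheory Metric
open scoped ENNReal
open scoped RealInnerProductSpace

set_option linter.unusedTactic false
set_option linter.unusedVariables false
set_option maxHeartbeats 1000000


noncomputable def bcoef (α : ℝ) : ℕ → ℝ
  | 0 => 1
  | (k+1) => bcoef α k * ((k : ℝ) - α) / (k+1)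

variable {α : ℝ} (hα0 : 0 < α) (hα1 : α < 1)

lemma bcoef_succ (k : ℕ) : bcoef α (k+1) = bcoef α k * ((k : ℝ) - α) / (k+1) := rfl

lemma bcoef_succ_mul (k : ℕ) : ((k:ℝ)+1) * bcoef α (k+1) = ((k : ℝ) - α) * bcoef α k := by
  rw [bcoef_succ]; field_simp

include hα0 hα1 in
lemma bcoef_nonpos : ∀ k, 1 ≤ k → bcoef α k ≤ 0 := by
  intro k hk
  induction k with
  | zero => omega
  | succ m ih =>
    rcases Nat.eq_or_lt_of_le hk with h | h
    · obtain rfl : m = 0 := by omega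
      simp only [bcoef, Nat.cast_zero, mul_comm]
      rw [zero_sub]
      apply div_nonpos_of_nonpos_of_nonneg <;> nlinarith
    · have hm : 1 ≤ m := by omega
      have := ih hm
      rw [bcoef_succ]
      apply div_nonpos_of_nonpos_of_nonneg
      · apply mul_nonpos_of_nonpos_of_nonneg this
        have : (1:ℝ) ≤ m := by exact_mod_cast hm
        linarith
      · positivity

include hα0 hα1 in
lemma abs_bcoef_le_one : ∀ k, |bcoef α k| ≤ 1 := by
  intro k
  induction k with
  | zero => simp [bcoef]
  | succ m ih =>
    rw [bcoef_succ, abs_div, abs_mul, abs_of_pos (by positivity : (0:ℝ) < (m:ℝ)+1)]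
    rw [div_le_one (by positivity)]
    calc |bcoef α m| * |(m:ℝ) - α| ≤ 1 * ((m:ℝ)+1) := by
          apply mul_le_mul ih ?_ (abs_nonneg _) one_pos.le
          rw [abs_le]; constructor <;> [linarith [Nat.cast_nonneg (α := ℝ) m]; linarith]
      _ = (m:ℝ)+1 := one_mul _

lemma sum_bcoef_eq (N : ℕ) :
    α * ∑ k ∈ Finset.range N, bcoef α k = -((N:ℝ) * bcoef α N) := by
  induction N with
  | zero => simp
  | succ m ih =>
    rw [Finset.sum_range_succ, mul_add, ih, Nat.cast_succ, bcoef_succ_mul]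
    ring

include hα0 hα1 in
lemma sum_bcoef_nonneg (N : ℕ) : 0 ≤ ∑ k ∈ Finset.range N, bcoef α k := by
  have h := sum_bcoef_eq (α := α) N
  rcases Nat.eq_zero_or_pos N with rfl | hN
  · simp
  · have h1 : bcoef α N ≤ 0 := bcoef_nonpos hα0 hα1 N hN
    nlinarith [Nat.cast_nonneg (α := ℝ) N]

include hα0 hα1 in
lemma sum_abs_bcoef_le (N : ℕ) : ∑ k ∈ Finset.range N, |bcoef α k| ≤ 2 := by
  rcases Nat.eq_zero_or_pos N with rfl | hN
  · norm_num
  obtain ⟨m, rfl⟩ := Nat.exists_eq_succ_of_ne_zero (Nat.pos_iff_ne_zero.mp hN)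
  rw [Finset.sum_range_succ']
  have h0 : |bcoef α 0| = 1 := by simp [bcoef]
  have h1 : ∀ k ∈ Finset.range m, |bcoef α (k+1)| = -bcoef α (k+1) := by
    intro k _; exact abs_of_nonpos (bcoef_nonpos hα0 hα1 _ (Nat.succ_le_succ (Nat.zero_le k)))
  rw [Finset.sum_congr rfl h1, h0, Finset.sum_neg_distrib]
  have h2 : ∑ k ∈ Finset.range m, bcoef α (k+1)
      = (∑ k ∈ Finset.range (m+1), bcoef α k) - bcoef α 0 := by
    rw [Finset.sum_range_succ']; ring
  have := sum_bcoef_nonneg hα0 hα1 (m+1)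
  rw [h2]; simp [bcoef]; linarith

include hα0 hα1 in
lemma summable_abs_bcoef : Summable (fun k => |bcoef α k|) :=
  summable_of_sum_range_le (fun _ => abs_nonneg _) (sum_abs_bcoef_le hα0 hα1)

include hα0 hα1 in
lemma summable_bcoef_mul {x : ℝ} (hx : |x| ≤ 1) :
    Summable (fun k => bcoef α k * x ^ k) := by
  apply Summable.of_norm_bounded (summable_abs_bcoef hα0 hα1)
  intro k
  rw [Real.norm_eq_abs, abs_mul, abs_pow]
  calc |bcoef α k| * |x| ^ k ≤ |bcoef α k| * 1 := by
        apply mul_le_mul_of_nonneg_left _ (abs_nonneg _)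
        exact pow_le_one₀ (abs_nonneg _) hx
    _ = |bcoef α k| := mul_one _

/-- The binomial series sum. -/
noncomputable def bS (α x : ℝ) : ℝ := ∑' k, bcoef α k * x ^ k

/-- derivative series -/
noncomputable def bT (α x : ℝ) : ℝ := ∑' k : ℕ, ((k:ℝ)+1) * bcoef α (k+1) * x ^ k

include hα0 hα1 in
lemma summable_bT {x : ℝ} (hx : |x| < 1) :
    Summable (fun k : ℕ => ((k:ℝ)+1) * bcoef α (k+1) * x ^ k) := by
  have h1 : Summable (fun k : ℕ => ((k:ℝ)+1) * |x| ^ k) := by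
    have ha : Summable (fun k : ℕ => (k:ℝ)^1 * |x| ^ k) :=
      summable_pow_mul_geometric_of_norm_lt_one 1 (by rwa [Real.norm_eq_abs, abs_abs])
    have hb : Summable (fun k : ℕ => |x| ^ k) :=
      summable_geometric_of_lt_one (abs_nonneg _) hx
    simpa [add_mul, pow_one] using ha.add hb
  apply Summable.of_norm_bounded h1
  intro k
  rw [Real.norm_eq_abs, abs_mul, abs_mul, abs_pow]
  have h2 : |(k:ℝ)+1| = (k:ℝ)+1 := abs_of_pos (by positivity)
  rw [h2]
  apply mul_le_mul_of_nonneg_right _ (pow_nonneg (abs_nonneg _) _)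
  calc ((k:ℝ)+1) * |bcoef α (k+1)| ≤ ((k:ℝ)+1) * 1 :=
        mul_le_mul_of_nonneg_left (abs_bcoef_le_one hα0 hα1 _) (by positivity)
    _ = (k:ℝ)+1 := mul_one _

include hα0 hα1 in
lemma hasDerivAt_bS {x : ℝ} (hx : |x| < 1) : HasDerivAt (bS α) (bT α x) x := by
  set r : ℝ := (1 + |x|)/2 with hrdef
  have hr1 : r < 1 := by rw [hrdef]; linarith
  have hr0 : 0 < r := by rw [hrdef]; positivity
  have hxr : |x| < r := by rw [hrdef]; linarith
  set g : ℕ → ℝ → ℝ := fun k y => bcoef α k * y ^ k with hg_def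
  set g' : ℕ → ℝ → ℝ := fun k y => (k:ℝ) * bcoef α k * y ^ (k-1) with hg'_def
  set u : ℕ → ℝ := fun k => (k:ℝ) * r ^ (k-1) with hu_def
  have hu : Summable u := by
    rw [← summable_nat_add_iff 1]
    have h1 : Summable (fun k : ℕ => ((k:ℝ)+1) * r ^ k) := by
      have ha : Summable (fun k : ℕ => (k:ℝ)^1 * r ^ k) :=
        summable_pow_mul_geometric_of_norm_lt_one 1
          (by rwa [Real.norm_eq_abs, abs_of_pos hr0])
      have hb : Summable (fun k : ℕ => r ^ k) := summable_geometric_of_lt_one hr0.le hr1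
      simpa [add_mul, pow_one] using ha.add hb
    convert h1 using 2 with k
    · rfl
    simp [hu_def]
  have hg : ∀ k (y : ℝ), y ∈ Metric.ball (0:ℝ) r → HasDerivAt (g k) (g' k y) y := by
    intro k y _
    match k with
    | 0 => simpa [hg_def, hg'_def] using hasDerivAt_const y (bcoef α 0)
    | (m+1) =>
      have := (hasDerivAt_pow (m+1) y).const_mul (bcoef α (m+1))
      convert this using 1
      · rfl
      · rfl
      simp [hg'_def]; push_cast; ring
  have hbound : ∀ k (y : ℝ), y ∈ Metric.ball (0:ℝ) r → ‖g' k y‖ ≤ u k := by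
    intro k y hy
    rw [Metric.mem_ball, Real.dist_eq, sub_zero] at hy
    simp only [hg'_def, hu_def, Real.norm_eq_abs, abs_mul, abs_pow, Nat.abs_cast]
    calc (k:ℝ) * |bcoef α k| * |y| ^ (k-1)
        ≤ (k:ℝ) * 1 * r ^ (k-1) := by
          apply mul_le_mul
          · exact mul_le_mul_of_nonneg_left (abs_bcoef_le_one hα0 hα1 _) (Nat.cast_nonneg _)
          · exact pow_le_pow_left₀ (abs_nonneg _) hy.le _
          · positivity
          · positivity
      _ = (k:ℝ) * r ^ (k-1) := by ring
  have hg0 : Summable (fun k => g k 0) := by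
    apply summable_bcoef_mul hα0 hα1; simp
  have hmem : x ∈ Metric.ball (0:ℝ) r := by
    rw [Metric.mem_ball, Real.dist_eq, sub_zero]; exact hxr
  have h0mem : (0:ℝ) ∈ Metric.ball (0:ℝ) r := by
    rw [Metric.mem_ball, Real.dist_eq, sub_zero]; simpa using hr0
  have key := hasDerivAt_tsum_of_isPreconnected hu Metric.isOpen_ball
    (convex_ball (0:ℝ) r).isPreconnected
    hg hbound h0mem hg0 hmem
  have hsum_eq : ∑' k, g' k x = bT α x := by
    have hsumm : Summable (fun k => g' k x) :=
      Summable.of_norm_bounded hu (fun k => hbound k x hmem)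
    rw [Summable.tsum_eq_zero_add hsumm]
    have h00 : g' 0 x = 0 := by simp [hg'_def]
    rw [h00, zero_add, bT]
    congr 1 with k
    simp [hg'_def]
  rw [← hsum_eq]
  exact key

include hα0 hα1 in
lemma bT_eq {x : ℝ} (hx : |x| < 1) : (1 - x) * bT α x = -α * bS α x := by
  have hS : HasSum (fun k : ℕ => bcoef α k * x ^ k) (bS α x) :=
    (summable_bcoef_mul hα0 hα1 hx.le).hasSum
  have hT : HasSum (fun k : ℕ => ((k:ℝ)+1) * bcoef α (k+1) * x ^ k) (bT α x) :=
    (summable_bT hα0 hα1 hx).hasSum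
  -- x * bT α x = ∑ k * bcoef k * x^k
  have hxT : HasSum (fun k : ℕ => (k:ℝ) * bcoef α k * x ^ k) (x * bT α x) := by
    have h1 := hT.mul_left x
    have h2 : (fun k : ℕ => x * (((k:ℝ)+1) * bcoef α (k+1) * x ^ k))
        = (fun k : ℕ => ((k+1:ℕ):ℝ) * bcoef α (k+1) * x ^ (k+1)) := by
      funext k; push_cast; ring
    rw [h2] at h1
    have h3 := (hasSum_nat_add_iff (f := fun k : ℕ => (k:ℝ) * bcoef α k * x ^ k) 1).1 h1
    simpa using h3
  -- bT in terms of (k - α) * bcoef k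
  have hT' : HasSum (fun k : ℕ => ((k:ℝ) - α) * bcoef α k * x ^ k) (bT α x) := by
    have h2 : (fun k : ℕ => ((k:ℝ)+1) * bcoef α (k+1) * x ^ k)
        = (fun k : ℕ => ((k:ℝ) - α) * bcoef α k * x ^ k) := by
      funext k; rw [bcoef_succ_mul]
    rwa [h2] at hT
  have hαS := hS.mul_left α
  have hcomb := hxT.sub hαS
  have h4 : (fun k : ℕ => (k:ℝ) * bcoef α k * x ^ k - α * (bcoef α k * x ^ k))
      = (fun k : ℕ => ((k:ℝ) - α) * bcoef α k * x ^ k) := by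
    funext k; ring
  rw [h4] at hcomb
  have := hT'.unique hcomb
  linear_combination this

include hα0 hα1 in
lemma bS_eq_on_Ioo {x : ℝ} (hx : |x| < 1) : bS α x = (1 - x) ^ α := by
  set g : ℝ → ℝ := fun y => bS α y * (1 - y) ^ (-α) with hg_def
  have hgderiv : ∀ y : ℝ, |y| < 1 → HasDerivAt g 0 y := by
    intro y hy
    have hy1 : (0:ℝ) < 1 - y := by rw [abs_lt] at hy; linarith
    have h1 : HasDerivAt (fun z : ℝ => z ^ (-α)) (-α * (1 - y) ^ (-α - 1)) (1 - y) :=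
      Real.hasDerivAt_rpow_const (Or.inl hy1.ne')
    have h2 : HasDerivAt (fun z : ℝ => 1 - z) (-1) y := by
      simpa using (hasDerivAt_id y).const_sub 1
    have h3 : HasDerivAt (fun z : ℝ => (1 - z) ^ (-α))
        ((-α * (1 - y) ^ (-α - 1)) * (-1)) y := h1.comp y h2
    have h4 := (hasDerivAt_bS hα0 hα1 hy).mul h3
    convert h4 using 1
    · rfl
    · rfl
    · rfl
    have hrw : (1 - y) ^ (-α) = (1 - y) ^ (-α - 1) * (1 - y) := by
      rw [← Real.rpow_add_one hy1.ne']; ring_nf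
    have hkey := bT_eq hα0 hα1 hy
    rw [hrw]
    linear_combination (-(1 - y) ^ (-α - 1)) * hkey
  have hg1 : ∀ y : ℝ, |y| < 1 → g y = 1 := by
    intro y hy
    have hy' := abs_lt.1 hy
    have hg0 : g 0 = 1 := by
      simp only [hg_def, bS]
      rw [tsum_eq_single 0 (by intro k hk; simp [zero_pow hk])]
      simp [bcoef]
    rcases le_or_gt 0 y with h | h
    · have key := constant_of_has_deriv_right_zero (f := g) (a := 0) (b := y)
        (fun z hz => (hgderiv z (abs_lt.2
          ⟨by linarith [hz.1], by linarith [hz.2]⟩)).continuousAt.continuousWithinAt)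
        (fun z hz => (hgderiv z (abs_lt.2
          ⟨by linarith [hz.1], by linarith [hz.2]⟩)).hasDerivWithinAt)
        y (Set.right_mem_Icc.2 h)
      rw [key, hg0]
    · have key := constant_of_has_deriv_right_zero (f := g) (a := y) (b := 0)
        (fun z hz => (hgderiv z (abs_lt.2
          ⟨by linarith [hz.1], by linarith [hz.2]⟩)).continuousAt.continuousWithinAt)
        (fun z hz => (hgderiv z (abs_lt.2
          ⟨by linarith [hz.1], by linarith [hz.2]⟩)).hasDerivWithinAt)
        0 (Set.right_mem_Icc.2 h.le)
      rw [← key, hg0]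
  have hy1 : (0:ℝ) < 1 - x := by rw [abs_lt] at hx; linarith
  have := hg1 x hx
  simp only [hg_def] at this
  have h5 : (1 - x) ^ (-α) = ((1 - x) ^ α)⁻¹ := by
    rw [Real.rpow_neg hy1.le]
  rw [h5] at this
  have h6 : (0:ℝ) < (1 - x) ^ α := Real.rpow_pos_of_pos hy1 α
  field_simp at this
  linarith

include hα0 hα1 in
lemma continuousOn_bS : ContinuousOn (bS α) (Set.Icc (-1:ℝ) 1) := by
  have hb : ∀ (k : ℕ), ∀ x ∈ Set.Icc (-1:ℝ) 1, ‖bcoef α k * x ^ k‖ ≤ |bcoef α k| := by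
    intro k x hx
    rw [Real.norm_eq_abs, abs_mul, abs_pow]
    calc |bcoef α k| * |x| ^ k ≤ |bcoef α k| * 1 :=
          mul_le_mul_of_nonneg_left
            (pow_le_one₀ (abs_nonneg _) (abs_le.2 ⟨hx.1, hx.2⟩)) (abs_nonneg _)
      _ = _ := mul_one _
  exact (tendstoUniformlyOn_tsum (summable_abs_bcoef hα0 hα1) hb).continuousOn
    (Filter.Eventually.frequently (Filter.Eventually.of_forall fun t =>
      (continuous_finset_sum t fun k _ =>
        (continuous_const.mul (continuous_pow k))).continuousOn))

include hα0 hα1 in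
lemma bS_eq {x : ℝ} (hx : |x| ≤ 1) : bS α x = (1 - x) ^ α := by
  rcases lt_or_eq_of_le hx with h | h
  · exact bS_eq_on_Ioo hα0 hα1 h
  · have hb : x = 1 ∨ x = -1 := by
      rcases (abs_eq (by norm_num : (0:ℝ) ≤ 1)).1 h with h1 | h1
      · left; exact h1
      · right; exact h1
    have hmem : x ∈ Set.Icc (-1:ℝ) 1 := by
      rcases hb with rfl | rfl <;> norm_num
    have hclos : x ∈ closure (Set.Ioo (-1:ℝ) 1) := by
      rw [closure_Ioo (by norm_num : (-1:ℝ) ≠ 1)]; exact hmem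
    have hne : (nhdsWithin x (Set.Ioo (-1:ℝ) 1)).NeBot :=
      mem_closure_iff_nhdsWithin_neBot.1 hclos
    have h1 : Filter.Tendsto (bS α) (nhdsWithin x (Set.Ioo (-1:ℝ) 1)) (nhds (bS α x)) :=
      ((continuousOn_bS hα0 hα1 x hmem).mono Set.Ioo_subset_Icc_self).tendsto
    have hcont : Continuous (fun y : ℝ => (1 - y) ^ α) :=
      (Real.continuous_rpow_const hα0.le).comp (continuous_const.sub continuous_id)
    have h2 : Filter.Tendsto (fun y : ℝ => (1 - y) ^ α)
        (nhdsWithin x (Set.Ioo (-1:ℝ) 1)) (nhds ((1 - x) ^ α)) :=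
      (hcont.tendsto x).mono_left nhdsWithin_le_nhds
    have heq : ∀ᶠ y in nhdsWithin x (Set.Ioo (-1:ℝ) 1), bS α y = (1 - y) ^ α := by
      filter_upwards [self_mem_nhdsWithin] with y hy
      exact bS_eq_on_Ioo hα0 hα1 (abs_lt.2 ⟨hy.1, hy.2⟩)
    exact tendsto_nhds_unique (h1.congr' heq) h2

include hα0 hα1 in
lemma binomial_hasSum {x : ℝ} (hx : |x| ≤ 1) :
    HasSum (fun k : ℕ => bcoef α k * x ^ k) ((1 - x) ^ α) := by
  have h := (summable_bcoef_mul hα0 hα1 hx).hasSum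
  rwa [show (∑' k : ℕ, bcoef α k * x ^ k) = (1 - x) ^ α from bS_eq hα0 hα1 hx] at h


variable {n : ℕ}

lemma sph_integrable {f : sphere (0 : EuclideanSpace ℝ (Fin n)) 1 → ℝ}
    (hf : Continuous f) (μ : Measure (sphere (0 : EuclideanSpace ℝ (Fin n)) 1))
    [IsFiniteMeasure μ] : Integrable f μ :=
  hf.integrable_of_hasCompactSupport (HasCompactSupport.of_compactSpace f)

lemma inner_abs_le (v w : sphere (0 : EuclideanSpace ℝ (Fin n)) 1) :
    |⟪(v : EuclideanSpace ℝ (Fin n)), (w : EuclideanSpace ℝ (Fin n))⟫| ≤ 1 := by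
  have := abs_real_inner_le_norm (v : EuclideanSpace ℝ (Fin n)) (w : EuclideanSpace ℝ (Fin n))
  rwa [norm_eq_of_mem_sphere, norm_eq_of_mem_sphere, mul_one] at this

lemma norm_sub_sq_eq (v w : sphere (0 : EuclideanSpace ℝ (Fin n)) 1) :
    ‖(v : EuclideanSpace ℝ (Fin n)) - (w : EuclideanSpace ℝ (Fin n))‖ ^ (2:ℕ)
      = 2 - 2 * ⟪(v : EuclideanSpace ℝ (Fin n)), (w : EuclideanSpace ℝ (Fin n))⟫ := by
  rw [norm_sub_sq_real, norm_eq_of_mem_sphere, norm_eq_of_mem_sphere]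
  ring

lemma inner_eq_sum (x y : EuclideanSpace ℝ (Fin n)) : ⟪x, y⟫ = ∑ i, x i * y i := by
  simp [PiLp.inner_apply, RCLike.inner_apply, mul_comm]

lemma cont_coord (i : Fin n) :
    Continuous (fun v : sphere (0 : EuclideanSpace ℝ (Fin n)) 1 =>
      (v : EuclideanSpace ℝ (Fin n)) i) :=
  ((EuclideanSpace.proj i).continuous).comp continuous_subtype_val

lemma cont_inner_right (v : sphere (0 : EuclideanSpace ℝ (Fin n)) 1) :
    Continuous (fun w : sphere (0 : EuclideanSpace ℝ (Fin n)) 1 =>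
      ⟪(v : EuclideanSpace ℝ (Fin n)), (w : EuclideanSpace ℝ (Fin n))⟫) :=
  Continuous.inner continuous_const continuous_subtype_val

/-- moment of a measure along a multi-index -/
noncomputable def mom (μ : Measure (sphere (0 : EuclideanSpace ℝ (Fin n)) 1))
    {k : ℕ} (c : Fin k → Fin n) : ℝ :=
  ∫ v, ∏ j, (v : EuclideanSpace ℝ (Fin n)) (c j) ∂μ

lemma cont_prod_coord {k : ℕ} (c : Fin k → Fin n) :
    Continuous (fun v : sphere (0 : EuclideanSpace ℝ (Fin n)) 1 =>
      ∏ j, (v : EuclideanSpace ℝ (Fin n)) (c j)) :=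
  continuous_finset_prod _ fun j _ => cont_coord (c j)

lemma inner_pow_eq {k : ℕ} (v w : sphere (0 : EuclideanSpace ℝ (Fin n)) 1) :
    ⟪(v : EuclideanSpace ℝ (Fin n)), (w : EuclideanSpace ℝ (Fin n))⟫ ^ k
      = ∑ c : Fin k → Fin n, (∏ j, (v : EuclideanSpace ℝ (Fin n)) (c j)) *
          (∏ j, (w : EuclideanSpace ℝ (Fin n)) (c j)) := by
  rw [inner_eq_sum, Fintype.sum_pow]
  congr 1; funext c
  rw [← Finset.prod_mul_distrib]

lemma integral_inner_pow (μ : Measure (sphere (0 : EuclideanSpace ℝ (Fin n)) 1))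
    [IsFiniteMeasure μ] (k : ℕ) (v : sphere (0 : EuclideanSpace ℝ (Fin n)) 1) :
    ∫ w, ⟪(v : EuclideanSpace ℝ (Fin n)), (w : EuclideanSpace ℝ (Fin n))⟫ ^ k ∂μ
      = ∑ c : Fin k → Fin n, (∏ j, (v : EuclideanSpace ℝ (Fin n)) (c j)) * mom μ c := by
  have h1 := fun w : sphere (0 : EuclideanSpace ℝ (Fin n)) 1 => inner_pow_eq (k := k) v w
  rw [integral_congr_ae (Filter.Eventually.of_forall h1),
    integral_finset_sum _ (fun c _ => (sph_integrable
      (f := fun w => (∏ j, (v : EuclideanSpace ℝ (Fin n)) (c j)) *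
        ∏ j, (w : EuclideanSpace ℝ (Fin n)) (c j)) (continuous_const.mul (cont_prod_coord c)) μ))]
  congr 1; funext c
  rw [MeasureTheory.integral_const_mul]; rfl

lemma Fk_eq (μ ν : Measure (sphere (0 : EuclideanSpace ℝ (Fin n)) 1))
    [IsFiniteMeasure μ] [IsFiniteMeasure ν] (k : ℕ) :
    ∫ v, ∫ w, ⟪(v : EuclideanSpace ℝ (Fin n)), (w : EuclideanSpace ℝ (Fin n))⟫ ^ k ∂ν ∂μ
      = ∑ c : Fin k → Fin n, mom μ c * mom ν c := by
  rw [integral_congr_ae (Filter.Eventually.of_forall (integral_inner_pow ν k)),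
    integral_finset_sum _ (fun c _ => ((sph_integrable (cont_prod_coord c) μ).mul_const _))]
  congr 1; funext c
  rw [MeasureTheory.integral_mul_const]; rfl

variable {p : ℝ}

lemma kernel_hasSum (hp0 : 0 < p) (hp2 : p < 2)
    (v w : sphere (0 : EuclideanSpace ℝ (Fin n)) 1) :
    HasSum (fun k : ℕ => (2:ℝ) ^ (p/2) * bcoef (p/2) k *
        ⟪(v : EuclideanSpace ℝ (Fin n)), (w : EuclideanSpace ℝ (Fin n))⟫ ^ k)
      (‖(v : EuclideanSpace ℝ (Fin n)) - (w : EuclideanSpace ℝ (Fin n))‖ ^ p) := by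
  have hα0 : 0 < p/2 := by linarith
  have hα1 : p/2 < 1 := by linarith
  set s := ⟪(v : EuclideanSpace ℝ (Fin n)), (w : EuclideanSpace ℝ (Fin n))⟫ with hs_def
  have hs : |s| ≤ 1 := inner_abs_le v w
  have hs1 : (0:ℝ) ≤ 1 - s := by rw [abs_le] at hs; linarith
  have h := (binomial_hasSum hα0 hα1 hs).mul_left ((2:ℝ) ^ (p/2))
  have harr : (2:ℝ) ^ (p/2) * (1 - s) ^ (p/2)
      = ‖(v : EuclideanSpace ℝ (Fin n)) - (w : EuclideanSpace ℝ (Fin n))‖ ^ p := by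
    rw [← Real.mul_rpow (by norm_num) hs1]
    have h2 : (2:ℝ) * (1 - s) = ‖(v : EuclideanSpace ℝ (Fin n)) -
        (w : EuclideanSpace ℝ (Fin n))‖ ^ (2:ℕ) := by
      rw [norm_sub_sq_eq]; ring
    rw [h2, ← Real.rpow_natCast ‖(v : EuclideanSpace ℝ (Fin n)) -
        (w : EuclideanSpace ℝ (Fin n))‖ 2, ← Real.rpow_mul (norm_nonneg _)]
    norm_num
    ring_nf
  rw [← harr]
  convert h using 2 with k
  · rfl
  ring

lemma abs_integral_inner_pow_le (ν : Measure (sphere (0 : EuclideanSpace ℝ (Fin n)) 1))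
    [IsProbabilityMeasure ν] (k : ℕ) (v : sphere (0 : EuclideanSpace ℝ (Fin n)) 1) :
    |∫ w, ⟪(v : EuclideanSpace ℝ (Fin n)), (w : EuclideanSpace ℝ (Fin n))⟫ ^ k ∂ν| ≤ 1 := by
  have h := norm_integral_le_of_norm_le_const (μ := ν) (C := 1)
    (f := fun w : sphere (0 : EuclideanSpace ℝ (Fin n)) 1 =>
      ⟪(v : EuclideanSpace ℝ (Fin n)), (w : EuclideanSpace ℝ (Fin n))⟫ ^ k) ?_
  · simpa using h
  · filter_upwards with w
    rw [Real.norm_eq_abs, abs_pow]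
    exact pow_le_one₀ (abs_nonneg _) (inner_abs_le v w)

lemma summable_cst (hp0 : 0 < p) (hp2 : p < 2) :
    Summable (fun k : ℕ => |(2:ℝ) ^ (p/2) * bcoef (p/2) k|) := by
  have := (summable_abs_bcoef (by linarith : 0 < p/2) (by linarith : p/2 < 1)).mul_left
    ((2:ℝ) ^ (p/2))
  apply this.congr
  intro k
  rw [abs_mul, abs_of_pos (Real.rpow_pos_of_pos (by norm_num) _)]

/-- helper: lintegral of nnnorm bounded by constant over a probability measure -/
lemma lintegral_nnnorm_le (μ : Measure (sphere (0 : EuclideanSpace ℝ (Fin n)) 1))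
    [IsProbabilityMeasure μ] {f : sphere (0 : EuclideanSpace ℝ (Fin n)) 1 → ℝ} {C : ℝ}
    (h : ∀ x, |f x| ≤ C) : ∫⁻ x, ‖f x‖₊ ∂μ ≤ ENNReal.ofReal C := by
  calc ∫⁻ x, (‖f x‖₊ : ℝ≥0∞) ∂μ ≤ ∫⁻ _, ENNReal.ofReal C ∂μ := by
        apply MeasureTheory.lintegral_mono
        intro x
        simp only []
        rw [← enorm_eq_nnnorm, Real.enorm_eq_ofReal_abs]
        exact ENNReal.ofReal_le_ofReal (h x)
    _ = ENNReal.ofReal C := by rw [MeasureTheory.lintegral_const, measure_univ, mul_one]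

lemma tsum_bound_ne_top (hp0 : 0 < p) (hp2 : p < 2)
    {F : ℕ → ℝ≥0∞}
    (hF : ∀ k, F k ≤ ENNReal.ofReal |(2:ℝ) ^ (p/2) * bcoef (p/2) k|) :
    ∑' k : ℕ, F k ≠ ⊤ := by
  apply ne_top_of_le_ne_top _ (ENNReal.tsum_le_tsum hF)
  rw [← ENNReal.ofReal_tsum_of_nonneg (fun k => abs_nonneg _) (summable_cst hp0 hp2)]
  exact ENNReal.ofReal_ne_top

lemma step_A (hp0 : 0 < p) (hp2 : p < 2)
    (ν : Measure (sphere (0 : EuclideanSpace ℝ (Fin n)) 1)) [IsProbabilityMeasure ν]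
    (v : sphere (0 : EuclideanSpace ℝ (Fin n)) 1) :
    ∫ w, ‖(v : EuclideanSpace ℝ (Fin n)) - (w : EuclideanSpace ℝ (Fin n))‖ ^ p ∂ν
      = ∑' k : ℕ, (2:ℝ) ^ (p/2) * bcoef (p/2) k *
          ∫ w, ⟪(v : EuclideanSpace ℝ (Fin n)), (w : EuclideanSpace ℝ (Fin n))⟫ ^ k ∂ν := by
  have hpt : ∀ w : sphere (0 : EuclideanSpace ℝ (Fin n)) 1,
      ‖(v : EuclideanSpace ℝ (Fin n)) - (w : EuclideanSpace ℝ (Fin n))‖ ^ p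
        = ∑' k : ℕ, (2:ℝ) ^ (p/2) * bcoef (p/2) k *
            ⟪(v : EuclideanSpace ℝ (Fin n)), (w : EuclideanSpace ℝ (Fin n))⟫ ^ k :=
    fun w => (kernel_hasSum hp0 hp2 v w).tsum_eq.symm
  rw [integral_congr_ae (Filter.Eventually.of_forall hpt)]
  rw [MeasureTheory.integral_tsum]
  · congr 1; funext k
    rw [MeasureTheory.integral_const_mul]
  · intro k
    exact (Continuous.aestronglyMeasurable
      (continuous_const.mul ((cont_inner_right v).pow k)))
  · apply tsum_bound_ne_top hp0 hp2
    intro k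
    apply lintegral_nnnorm_le
    intro w
    rw [abs_mul]
    calc |(2:ℝ) ^ (p/2) * bcoef (p/2) k| *
        |⟪(v : EuclideanSpace ℝ (Fin n)), (w : EuclideanSpace ℝ (Fin n))⟫ ^ k|
        ≤ |(2:ℝ) ^ (p/2) * bcoef (p/2) k| * 1 := by
          apply mul_le_mul_of_nonneg_left _ (abs_nonneg _)
          rw [abs_pow]
          exact pow_le_one₀ (abs_nonneg _) (inner_abs_le v w)
      _ = _ := mul_one _

lemma cont_G (ν : Measure (sphere (0 : EuclideanSpace ℝ (Fin n)) 1))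
    [IsProbabilityMeasure ν] (k : ℕ) :
    Continuous (fun v : sphere (0 : EuclideanSpace ℝ (Fin n)) 1 =>
      ∫ w, ⟪(v : EuclideanSpace ℝ (Fin n)), (w : EuclideanSpace ℝ (Fin n))⟫ ^ k ∂ν) := by
  have : (fun v : sphere (0 : EuclideanSpace ℝ (Fin n)) 1 =>
      ∫ w, ⟪(v : EuclideanSpace ℝ (Fin n)), (w : EuclideanSpace ℝ (Fin n))⟫ ^ k ∂ν)
      = (fun v : sphere (0 : EuclideanSpace ℝ (Fin n)) 1 =>
        ∑ c : Fin k → Fin n, (∏ j, (v : EuclideanSpace ℝ (Fin n)) (c j)) * mom ν c) := by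
    funext v; exact integral_inner_pow ν k v
  rw [this]
  exact continuous_finset_sum _ fun c _ => (cont_prod_coord c).mul continuous_const

lemma I_eq (hp0 : 0 < p) (hp2 : p < 2)
    (μ ν : Measure (sphere (0 : EuclideanSpace ℝ (Fin n)) 1))
    [IsProbabilityMeasure μ] [IsProbabilityMeasure ν] :
    ∫ v, ∫ w, ‖(v : EuclideanSpace ℝ (Fin n)) - (w : EuclideanSpace ℝ (Fin n))‖ ^ p ∂ν ∂μ
      = ∑' k : ℕ, (2:ℝ) ^ (p/2) * bcoef (p/2) k *
          ∑ c : Fin k → Fin n, mom μ c * mom ν c := by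
  rw [integral_congr_ae (Filter.Eventually.of_forall (step_A hp0 hp2 ν))]
  rw [MeasureTheory.integral_tsum]
  · congr 1; funext k
    rw [MeasureTheory.integral_const_mul, ← Fk_eq μ ν k]
  · intro k
    exact (continuous_const.mul (cont_G ν k)).aestronglyMeasurable
  · apply tsum_bound_ne_top hp0 hp2
    intro k
    apply lintegral_nnnorm_le
    intro v
    rw [abs_mul]
    calc |(2:ℝ) ^ (p/2) * bcoef (p/2) k| *
        |∫ w, ⟪(v : EuclideanSpace ℝ (Fin n)), (w : EuclideanSpace ℝ (Fin n))⟫ ^ k ∂ν|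
        ≤ |(2:ℝ) ^ (p/2) * bcoef (p/2) k| * 1 :=
          mul_le_mul_of_nonneg_left (abs_integral_inner_pow_le ν k v) (abs_nonneg _)
      _ = _ := mul_one _

lemma S_zero (μ ν : Measure (sphere (0 : EuclideanSpace ℝ (Fin n)) 1))
    [IsProbabilityMeasure μ] [IsProbabilityMeasure ν] :
    ∑ c : Fin 0 → Fin n, mom μ c * mom ν c = 1 := by
  have h1 : ∀ (ρ : Measure (sphere (0 : EuclideanSpace ℝ (Fin n)) 1))
      [IsProbabilityMeasure ρ] (c : Fin 0 → Fin n), mom ρ c = 1 := by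
    intro ρ _ c
    rw [mom]
    simp
  rw [Finset.sum_congr rfl (fun c _ => by rw [h1 μ c, h1 ν c])]
  simp [Finset.card_univ]

lemma abs_S_le (μ ν : Measure (sphere (0 : EuclideanSpace ℝ (Fin n)) 1))
    [IsProbabilityMeasure μ] [IsProbabilityMeasure ν] (k : ℕ) :
    |∑ c : Fin k → Fin n, mom μ c * mom ν c| ≤ 1 := by
  rw [← Fk_eq μ ν k]
  have h := norm_integral_le_of_norm_le_const (μ := μ) (C := 1)
    (f := fun v : sphere (0 : EuclideanSpace ℝ (Fin n)) 1 =>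
      ∫ w, ⟪(v : EuclideanSpace ℝ (Fin n)), (w : EuclideanSpace ℝ (Fin n))⟫ ^ k ∂ν) ?_
  · simpa using h
  · filter_upwards with v
    rw [Real.norm_eq_abs]
    exact abs_integral_inner_pow_le ν k v

lemma summable_cst_S (hp0 : 0 < p) (hp2 : p < 2)
    (μ ν : Measure (sphere (0 : EuclideanSpace ℝ (Fin n)) 1))
    [IsProbabilityMeasure μ] [IsProbabilityMeasure ν] :
    Summable (fun k : ℕ => (2:ℝ) ^ (p/2) * bcoef (p/2) k *
      ∑ c : Fin k → Fin n, mom μ c * mom ν c) := by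
  apply Summable.of_norm_bounded (summable_cst hp0 hp2)
  intro k
  rw [Real.norm_eq_abs, abs_mul]
  calc |(2:ℝ) ^ (p/2) * bcoef (p/2) k| * |∑ c : Fin k → Fin n, mom μ c * mom ν c|
      ≤ |(2:ℝ) ^ (p/2) * bcoef (p/2) k| * 1 :=
        mul_le_mul_of_nonneg_left (abs_S_le μ ν k) (abs_nonneg _)
    _ = _ := mul_one _

lemma S_diff_nonneg (μ₁ μ₂ : Measure (sphere (0 : EuclideanSpace ℝ (Fin n)) 1)) (k : ℕ) :
    0 ≤ (∑ c : Fin k → Fin n, mom μ₁ c * mom μ₁ c)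
        + (∑ c : Fin k → Fin n, mom μ₂ c * mom μ₂ c)
        - 2 * ∑ c : Fin k → Fin n, mom μ₁ c * mom μ₂ c := by
  have hexp : ∑ c : Fin k → Fin n, (mom μ₁ c - mom μ₂ c)^2
      = (∑ c : Fin k → Fin n, mom μ₁ c * mom μ₁ c)
        + (∑ c : Fin k → Fin n, mom μ₂ c * mom μ₂ c)
        - 2 * ∑ c : Fin k → Fin n, mom μ₁ c * mom μ₂ c := by
    rw [Finset.sum_congr rfl (fun c _ => by ring :
      ∀ c ∈ Finset.univ, (mom μ₁ c - mom μ₂ c)^2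
        = (mom μ₁ c * mom μ₁ c + mom μ₂ c * mom μ₂ c) - 2 * (mom μ₁ c * mom μ₂ c)),
      Finset.sum_sub_distrib, Finset.sum_add_distrib, ← Finset.mul_sum]
  rw [← hexp]
  exact Finset.sum_nonneg fun c _ => sq_nonneg _

lemma key_ineq (hp0 : 0 < p) (hp2 : p < 2)
    (μ₁ μ₂ : Measure (sphere (0 : EuclideanSpace ℝ (Fin n)) 1))
    [IsProbabilityMeasure μ₁] [IsProbabilityMeasure μ₂] :
    (∫ v, ∫ w, ‖(v : EuclideanSpace ℝ (Fin n)) - (w : EuclideanSpace ℝ (Fin n))‖ ^ p ∂μ₁ ∂μ₁)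
    + (∫ v, ∫ w, ‖(v : EuclideanSpace ℝ (Fin n)) - (w : EuclideanSpace ℝ (Fin n))‖ ^ p ∂μ₂ ∂μ₂)
    ≤ 2 * ∫ v, ∫ w, ‖(v : EuclideanSpace ℝ (Fin n)) - (w : EuclideanSpace ℝ (Fin n))‖ ^ p ∂μ₂ ∂μ₁ := by
  have hα0 : 0 < p/2 := by linarith
  have hα1 : p/2 < 1 := by linarith
  rw [I_eq hp0 hp2 μ₁ μ₁, I_eq hp0 hp2 μ₂ μ₂, I_eq hp0 hp2 μ₁ μ₂]
  have hA := summable_cst_S hp0 hp2 μ₁ μ₁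
  have hB := summable_cst_S hp0 hp2 μ₂ μ₂
  have hC := summable_cst_S hp0 hp2 μ₁ μ₂
  rw [← Summable.tsum_add hA hB, ← tsum_mul_left]
  apply Summable.tsum_le_tsum _ (hA.add hB) (hC.mul_left 2)
  intro k
  match k with
  | 0 =>
    simp only [S_zero μ₁ μ₁, S_zero μ₂ μ₂, S_zero μ₁ μ₂]
    ring_nf
    exact le_rfl
  | (m+1) =>
    have hc : (2:ℝ) ^ (p/2) * bcoef (p/2) (m+1) ≤ 0 :=
      mul_nonpos_of_nonneg_of_nonpos (Real.rpow_pos_of_pos (by norm_num) _).le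
        (bcoef_nonpos hα0 hα1 (m+1) (Nat.succ_le_succ (Nat.zero_le m)))
    have hd := S_diff_nonneg (n := n) μ₁ μ₂ (m+1)
    set c := (2:ℝ) ^ (p/2) * bcoef (p/2) (m+1)
    set A := ∑ c : Fin (m+1) → Fin n, mom μ₁ c * mom μ₁ c
    set B := ∑ c : Fin (m+1) → Fin n, mom μ₂ c * mom μ₂ c
    set C := ∑ c : Fin (m+1) → Fin n, mom μ₁ c * mom μ₂ c
    nlinarith [mul_nonpos_of_nonpos_of_nonneg hc hd]

lemma I_symm (hp0 : 0 < p) (hp2 : p < 2)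
    (μ ν : Measure (sphere (0 : EuclideanSpace ℝ (Fin n)) 1))
    [IsProbabilityMeasure μ] [IsProbabilityMeasure ν] :
    ∫ v, ∫ w, ‖(v : EuclideanSpace ℝ (Fin n)) - (w : EuclideanSpace ℝ (Fin n))‖ ^ p ∂ν ∂μ
      = ∫ v, ∫ w, ‖(v : EuclideanSpace ℝ (Fin n)) - (w : EuclideanSpace ℝ (Fin n))‖ ^ p ∂μ ∂ν := by
  rw [I_eq hp0 hp2 μ ν, I_eq hp0 hp2 ν μ]
  congr 1; funext k
  congr 1
  exact Finset.sum_congr rfl fun c _ => mul_comm _ _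

lemma cont_Kv (hp0 : 0 < p) (v : sphere (0 : EuclideanSpace ℝ (Fin n)) 1) :
    Continuous (fun w : sphere (0 : EuclideanSpace ℝ (Fin n)) 1 =>
      ‖(v : EuclideanSpace ℝ (Fin n)) - (w : EuclideanSpace ℝ (Fin n))‖ ^ p) :=
  (Real.continuous_rpow_const hp0.le).comp
    ((continuous_const.sub continuous_subtype_val).norm)

lemma cont_Kw (hp0 : 0 < p) (w : sphere (0 : EuclideanSpace ℝ (Fin n)) 1) :
    Continuous (fun v : sphere (0 : EuclideanSpace ℝ (Fin n)) 1 =>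
      ‖(v : EuclideanSpace ℝ (Fin n)) - (w : EuclideanSpace ℝ (Fin n))‖ ^ p) :=
  (Real.continuous_rpow_const hp0.le).comp
    ((continuous_subtype_val.sub continuous_const).norm)

lemma K_le (hp0 : 0 < p) (v w : sphere (0 : EuclideanSpace ℝ (Fin n)) 1) :
    ‖(v : EuclideanSpace ℝ (Fin n)) - (w : EuclideanSpace ℝ (Fin n))‖ ^ p ≤ (2:ℝ) ^ p := by
  apply Real.rpow_le_rpow (norm_nonneg _) _ hp0.le
  calc ‖(v : EuclideanSpace ℝ (Fin n)) - (w : EuclideanSpace ℝ (Fin n))‖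
      ≤ ‖(v : EuclideanSpace ℝ (Fin n))‖ + ‖(w : EuclideanSpace ℝ (Fin n))‖ := norm_sub_le _ _
    _ = 2 := by rw [norm_eq_of_mem_sphere, norm_eq_of_mem_sphere]; norm_num

lemma cont_Gfun (hp0 : 0 < p) (ν : Measure (sphere (0 : EuclideanSpace ℝ (Fin n)) 1))
    [IsProbabilityMeasure ν] :
    Continuous (fun v : sphere (0 : EuclideanSpace ℝ (Fin n)) 1 =>
      ∫ w, ‖(v : EuclideanSpace ℝ (Fin n)) - (w : EuclideanSpace ℝ (Fin n))‖ ^ p ∂ν) := by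
  apply MeasureTheory.continuous_of_dominated (bound := fun _ => (2:ℝ) ^ p)
  · exact fun v => (cont_Kv hp0 v).aestronglyMeasurable
  · intro v
    filter_upwards with w
    rw [Real.norm_eq_abs, abs_of_nonneg (Real.rpow_nonneg (norm_nonneg _) _)]
    exact K_le hp0 v w
  · exact MeasureTheory.integrable_const _
  · filter_upwards with w
    exact cont_Kw hp0 w

theorem stmt6 (n : ℕ) (hn : 2 ≤ n) (p : ℝ) (hp0 : 0 < p) (hp2 : p < 2)
    (μ₁ μ₂ : Measure (sphere (0 : EuclideanSpace ℝ (Fin n)) 1))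
    [IsProbabilityMeasure μ₁] [IsProbabilityMeasure μ₂]
    (hbary₁ : (∫ v, (v : EuclideanSpace ℝ (Fin n)) ∂μ₁) = 0)
    (hbary₂ : (∫ v, (v : EuclideanSpace ℝ (Fin n)) ∂μ₂) = 0)
    (t : ℝ) (ht0 : 0 ≤ t) (ht1 : t ≤ 1) :
    t * Jp n p μ₁ + (1 - t) * Jp n p μ₂ ≤
      Jp n p (ENNReal.ofReal t • μ₁ + ENNReal.ofReal (1 - t) • μ₂) := by
  set K : sphere (0 : EuclideanSpace ℝ (Fin n)) 1 →
      sphere (0 : EuclideanSpace ℝ (Fin n)) 1 → ℝ :=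
    fun v w => ‖(v : EuclideanSpace ℝ (Fin n)) - (w : EuclideanSpace ℝ (Fin n))‖ ^ p with hK
  have hta : (ENNReal.ofReal t).toReal = t := ENNReal.toReal_ofReal ht0
  have htb : (ENNReal.ofReal (1-t)).toReal = 1 - t := ENNReal.toReal_ofReal (by linarith)
  have hiK : ∀ (v : sphere (0 : EuclideanSpace ℝ (Fin n)) 1)
      (ρ : Measure (sphere (0 : EuclideanSpace ℝ (Fin n)) 1)) [IsFiniteMeasure ρ],
      Integrable (K v) ρ := fun v ρ _ => sph_integrable (cont_Kv hp0 v) ρ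
  -- inner splitting
  have hinner : ∀ v : sphere (0 : EuclideanSpace ℝ (Fin n)) 1,
      ∫ w, K v w ∂(ENNReal.ofReal t • μ₁ + ENNReal.ofReal (1 - t) • μ₂)
        = t * (∫ w, K v w ∂μ₁) + (1 - t) * (∫ w, K v w ∂μ₂) := by
    intro v
    rw [integral_add_measure ((hiK v μ₁).smul_measure ENNReal.ofReal_ne_top)
      ((hiK v μ₂).smul_measure ENNReal.ofReal_ne_top),
      integral_smul_measure, integral_smul_measure, hta, htb, smul_eq_mul, smul_eq_mul]
  set G₁ : sphere (0 : EuclideanSpace ℝ (Fin n)) 1 → ℝ := fun v => ∫ w, K v w ∂μ₁ with hG1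
  set G₂ : sphere (0 : EuclideanSpace ℝ (Fin n)) 1 → ℝ := fun v => ∫ w, K v w ∂μ₂ with hG2
  have hcG1 : Continuous G₁ := cont_Gfun hp0 μ₁
  have hcG2 : Continuous G₂ := cont_Gfun hp0 μ₂
  have hf : Continuous (fun v => t * G₁ v + (1 - t) * G₂ v) :=
    (continuous_const.mul hcG1).add (continuous_const.mul hcG2)
  have houter : Jp n p (ENNReal.ofReal t • μ₁ + ENNReal.ofReal (1 - t) • μ₂)
      = t * (∫ v, (t * G₁ v + (1 - t) * G₂ v) ∂μ₁)
        + (1 - t) * (∫ v, (t * G₁ v + (1 - t) * G₂ v) ∂μ₂) := by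
    rw [Jp]
    rw [integral_congr_ae (Filter.Eventually.of_forall hinner)]
    rw [integral_add_measure
      ((sph_integrable hf μ₁).smul_measure ENNReal.ofReal_ne_top)
      ((sph_integrable hf μ₂).smul_measure ENNReal.ofReal_ne_top),
      integral_smul_measure, integral_smul_measure, hta, htb, smul_eq_mul, smul_eq_mul]
  have hsplit : ∀ (ρ : Measure (sphere (0 : EuclideanSpace ℝ (Fin n)) 1))
      [IsProbabilityMeasure ρ],
      ∫ v, (t * G₁ v + (1 - t) * G₂ v) ∂ρ
        = t * (∫ v, G₁ v ∂ρ) + (1 - t) * (∫ v, G₂ v ∂ρ) := by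
    intro ρ _
    rw [integral_add ((sph_integrable hcG1 ρ).const_mul t)
      ((sph_integrable hcG2 ρ).const_mul (1-t)),
      MeasureTheory.integral_const_mul, MeasureTheory.integral_const_mul]
  rw [houter, hsplit μ₁, hsplit μ₂]
  have hI11 : ∫ v, G₁ v ∂μ₁ = Jp n p μ₁ := rfl
  have hI22 : ∫ v, G₂ v ∂μ₂ = Jp n p μ₂ := rfl
  have hIsymm : ∫ v, G₁ v ∂μ₂ = ∫ v, G₂ v ∂μ₁ := I_symm hp0 hp2 μ₂ μ₁
  have hkey : Jp n p μ₁ + Jp n p μ₂ ≤ 2 * ∫ v, G₂ v ∂μ₁ := by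
    have := key_ineq hp0 hp2 μ₁ μ₂
    rw [← hI11, ← hI22]
    exact this
  rw [hI11, hI22, hIsymm]
  set I11 := Jp n p μ₁
  set I22 := Jp n p μ₂
  set I12 := ∫ v, G₂ v ∂μ₁
  nlinarith [mul_nonneg (mul_nonneg ht0 (by linarith : (0:ℝ) ≤ 1 - t))
    (by linarith : (0:ℝ) ≤ 2 * I12 - I11 - I22)]
end

section
/- Let p > 4, A ∈ (0,1], and let f(t) = (1−t)^{p/2}. Suppose ν is a probability measure on the interval [−1,1] satisfying ∫ t dν(t) = 0 and ∫ t² dν(t) = A, and suppose ν minimizes ∫_{-1}^{1} f(t) dν(t) among all probability measures on [−1,1] satisfying these two moment constraints. Then ν is supported on exactly two points: there exist a, b ∈ [−1,1] with a ≠ b and λ ∈ (0,1) such that ν = λ δ_a + (1−λ) δ_b. -/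
open MeasureTheory


lemma aux_integral_two_point (a b c d : ℝ) (hc : 0 ≤ c) (hd : 0 ≤ d) (f : ℝ → ℝ) :
    ∫ t, f t ∂(ENNReal.ofReal c • Measure.dirac a + ENNReal.ofReal d • Measure.dirac b)
      = c * f a + d * f b := by
  have hia : Integrable f (Measure.dirac a) :=
    (integrable_const (f a)).congr (MeasureTheory.ae_eq_dirac f).symm
  have hib : Integrable f (Measure.dirac b) :=
    (integrable_const (f b)).congr (MeasureTheory.ae_eq_dirac f).symm
  rw [integral_add_measure (hia.smul_measure ENNReal.ofReal_ne_top)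
      (hib.smul_measure ENNReal.ofReal_ne_top),
    integral_smul_measure, integral_smul_measure, integral_dirac, integral_dirac,
    ENNReal.toReal_ofReal hc, ENNReal.toReal_ofReal hd, smul_eq_mul, smul_eq_mul]

lemma aux_tangent_lt {c B u : ℝ} (hc : 1 < c) (hB : 0 < B) (hu : 0 ≤ u) (hne : u ≠ B) :
    B ^ c + c * B ^ (c - 1) * (u - B) < u ^ c := by
  have h1 : -1 ≤ u / B - 1 := by
    have : 0 ≤ u / B := div_nonneg hu hB.le
    linarith
  have h2 : u / B - 1 ≠ 0 := by
    intro h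
    apply hne
    have : u / B = 1 := by linarith
    field_simp at this
    linarith
  have key := one_add_mul_self_lt_rpow_one_add h1 h2 hc
  have e1 : (1 : ℝ) + (u / B - 1) = u / B := by ring
  rw [e1, Real.div_rpow hu hB.le] at key
  have hBc : (0:ℝ) < B ^ c := Real.rpow_pos_of_pos hB c
  have key2 := mul_lt_mul_of_pos_right key hBc
  rw [div_mul_cancel₀ _ hBc.ne'] at key2
  have hB1 : B ^ (c - 1) * B = B ^ c := by
    rw [← Real.rpow_add_one hB.ne' (c-1)]
    ring_nf
  calc B ^ c + c * B ^ (c - 1) * (u - B)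
      = B ^ (c-1) * B + c * B ^ (c - 1) * (u - B) := by rw [hB1]
    _ = (1 + c * (u / B - 1)) * (B ^ (c-1) * B) := by field_simp
    _ = (1 + c * (u / B - 1)) * B ^ c := by rw [hB1]
    _ < u ^ c := key2

lemma aux_pw_lt {s B u : ℝ} (hs : 2 < s) (hB : 0 < B) (hu : 0 < u) (hne : u ≠ B) :
    (s - 1) * B ^ (s - 2) * u ^ 2 + (2 - s) * B ^ (s - 1) * u < u ^ s := by
  have hc : 1 < s - 1 := by linarith
  have key := aux_tangent_lt hc hB hu.le hne
  have e0 : s - 1 - 1 = s - 2 := by ring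
  rw [e0] at key
  have key2 := mul_lt_mul_of_pos_right key hu
  have hu1 : u ^ (s-1) * u = u ^ s := by
    rw [← Real.rpow_add_one hu.ne' (s-1)]; ring_nf
  have hB1 : B ^ (s - 2) * B = B ^ (s-1) := by
    rw [← Real.rpow_add_one hB.ne' (s-2)]; ring_nf
  calc (s - 1) * B ^ (s - 2) * u ^ 2 + (2 - s) * B ^ (s - 1) * u
      = (B ^ (s-1) + (s - 1) * B ^ (s - 2) * (u - B)) * u := by rw [← hB1]; ring
    _ < u ^ (s-1) * u := key2
    _ = u ^ s := hu1

lemma aux_pw_le {s B u : ℝ} (hs : 2 < s) (hB : 0 < B) (hu : 0 ≤ u) :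
    (s - 1) * B ^ (s - 2) * u ^ 2 + (2 - s) * B ^ (s - 1) * u ≤ u ^ s := by
  rcases eq_or_lt_of_le hu with h0 | h0
  · rw [← h0, Real.zero_rpow (by linarith : s ≠ 0)]
    norm_num
  rcases eq_or_ne u B with hub | hub
  · subst hub
    have hu1 : u ^ (s-1) * u = u ^ s := by
      rw [← Real.rpow_add_one h0.ne' (s-1)]; ring_nf
    have hB1 : u ^ (s - 2) * u = u ^ (s-1) := by
      rw [← Real.rpow_add_one h0.ne' (s-2)]; ring_nf
    have : (s - 1) * u ^ (s - 2) * u ^ 2 + (2 - s) * u ^ (s - 1) * u = u ^ s := by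
      rw [← hu1, ← hB1]; ring
    linarith
  · exact (aux_pw_lt hs hB h0 hub).le


theorem stmt14 (p A : ℝ) (hp : 4 < p) (hA0 : 0 < A) (hA1 : A ≤ 1)
    (ν : Measure ℝ) [IsProbabilityMeasure ν]
    (hsupp : ν (Set.Icc (-1 : ℝ) 1) = 1)
    (hm1 : (∫ t, t ∂ν) = 0) (hm2 : (∫ t, t ^ 2 ∂ν) = A)
    (hmin : ∀ ν' : Measure ℝ, IsProbabilityMeasure ν' →
      ν' (Set.Icc (-1 : ℝ) 1) = 1 → (∫ t, t ∂ν') = 0 → (∫ t, t ^ 2 ∂ν') = A →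
      (∫ t, (1 - t) ^ (p / 2) ∂ν) ≤ ∫ t, (1 - t) ^ (p / 2) ∂ν') :
    ∃ a ∈ Set.Icc (-1 : ℝ) 1, ∃ b ∈ Set.Icc (-1 : ℝ) 1, a ≠ b ∧
      ∃ l : ℝ, 0 < l ∧ l < 1 ∧
        ν = ENNReal.ofReal l • Measure.dirac a + ENNReal.ofReal (1 - l) • Measure.dirac b := by
  set s : ℝ := p / 2 with hs_def
  have hs2 : 2 < s := by rw [hs_def]; linarith
  have hs0 : (0:ℝ) < s := by linarith
  set B : ℝ := 1 + A with hB_def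
  have hB0 : (0:ℝ) < B := by rw [hB_def]; linarith
  set a : ℝ := -A with ha_def
  have haI : a ∈ Set.Icc (-1:ℝ) 1 := by
    constructor <;> rw [ha_def] <;> linarith
  have h1I : (1:ℝ) ∈ Set.Icc (-1:ℝ) 1 := by norm_num
  have hane : a ≠ 1 := by rw [ha_def]; intro h; linarith
  -- rpow identities
  have hBs1 : B ^ (s-1) * B = B ^ s := by
    rw [← Real.rpow_add_one hB0.ne' (s-1)]; ring_nf
  have hBs2 : B ^ (s-2) * B = B ^ (s-1) := by
    rw [← Real.rpow_add_one hB0.ne' (s-2)]; ring_nf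
  -- the candidate minimizing measure
  set ν₀ : Measure ℝ := ENNReal.ofReal (1/B) • Measure.dirac a
      + ENNReal.ofReal (A/B) • Measure.dirac 1 with hν₀
  have hc0 : (0:ℝ) ≤ 1/B := by positivity
  have hd0 : (0:ℝ) ≤ A/B := by positivity
  have hsum1 : 1/B + A/B = 1 := by field_simp; exact hB_def.symm
  have hprob : IsProbabilityMeasure ν₀ := by
    constructor
    rw [hν₀]
    simp only [Measure.add_apply, Measure.smul_apply, smul_eq_mul,
      Measure.dirac_apply' _ MeasurableSet.univ, Set.indicator_of_mem (Set.mem_univ _),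
      Pi.one_apply, mul_one]
    rw [← ENNReal.ofReal_add hc0 hd0, hsum1, ENNReal.ofReal_one]
  have hIcc : ν₀ (Set.Icc (-1:ℝ) 1) = 1 := by
    rw [hν₀]
    simp only [Measure.add_apply, Measure.smul_apply, smul_eq_mul,
      Measure.dirac_apply' _ measurableSet_Icc, Set.indicator_of_mem haI,
      Set.indicator_of_mem h1I, Pi.one_apply, mul_one]
    rw [← ENNReal.ofReal_add hc0 hd0, hsum1, ENNReal.ofReal_one]
  have hm1' : (∫ t, t ∂ν₀) = 0 := by
    rw [hν₀, aux_integral_two_point a 1 (1/B) (A/B) hc0 hd0 (fun t => t)]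
    rw [ha_def]; field_simp; ring
  have hm2' : (∫ t, t^2 ∂ν₀) = A := by
    rw [hν₀, aux_integral_two_point a 1 (1/B) (A/B) hc0 hd0 (fun t => t^2)]
    rw [ha_def, hB_def]; field_simp; ring
  have hval : (∫ t, (1-t)^s ∂ν₀) = B ^ (s - 1) := by
    rw [hν₀, aux_integral_two_point a 1 (1/B) (A/B) hc0 hd0 (fun t => (1-t)^s)]
    have e1 : (1:ℝ) - a = B := by rw [ha_def, hB_def]; ring
    rw [e1]
    norm_num [Real.zero_rpow hs0.ne']
    rw [← hBs1]; field_simp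
  have hle := hmin ν₀ hprob hIcc hm1' hm2'
  rw [hval] at hle
  -- a.e. membership in Icc
  have hcompl : ν (Set.Icc (-1:ℝ) 1)ᶜ = 0 := by
    rw [measure_compl measurableSet_Icc (by simp [hsupp]), measure_univ, hsupp, tsub_self]
  have haeIcc : ∀ᵐ t ∂ν, t ∈ Set.Icc (-1:ℝ) 1 := by
    rw [ae_iff]
    convert hcompl using 2
    rfl
  -- integrability facts
  have hmeas_f : Measurable (fun t : ℝ => (1-t)^s) :=
    ((Real.continuous_rpow_const hs0.le).comp (continuous_const.sub continuous_id)).measurable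
  have hint_f : Integrable (fun t : ℝ => (1-t)^s) ν := by
    apply Integrable.mono' (integrable_const ((2:ℝ)^s)) hmeas_f.aestronglyMeasurable
    filter_upwards [haeIcc] with t ht
    rw [Real.norm_eq_abs, abs_of_nonneg (Real.rpow_nonneg (by linarith [ht.2]) s)]
    exact Real.rpow_le_rpow (by linarith [ht.2]) (by linarith [ht.1]) hs0.le
  have hint_t : Integrable (fun t : ℝ => t) ν := by
    apply Integrable.mono' (integrable_const (1:ℝ)) measurable_id.aestronglyMeasurable
    filter_upwards [haeIcc] with t ht
    rw [Real.norm_eq_abs]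
    exact abs_le.mpr ⟨ht.1, ht.2⟩
  have hint_t2 : Integrable (fun t : ℝ => t^2) ν := by
    apply Integrable.mono' (integrable_const (1:ℝ))
      (measurable_id.pow_const 2).aestronglyMeasurable
    filter_upwards [haeIcc] with t ht
    simp only [id_eq, Real.norm_eq_abs]
    rw [abs_of_nonneg (sq_nonneg t)]
    nlinarith [ht.1, ht.2]
  set c1 : ℝ := (s-1) * B^(s-2) with hc1_def
  set c2 : ℝ := (2-s) * B^(s-1) with hc2_def
  have hint_lin : Integrable (fun t : ℝ => (-(2*c1) - c2) * t + c1 * t^2) ν :=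
    (hint_t.const_mul _).add (hint_t2.const_mul _)
  have hint_Q : Integrable (fun t : ℝ => c1*(1-t)^2 + c2*(1-t)) ν := by
    have e : (fun t : ℝ => c1*(1-t)^2 + c2*(1-t))
        = fun t : ℝ => (c1 + c2) + ((-(2*c1) - c2) * t + c1 * t^2) := by
      funext t; ring
    rw [e]
    exact (integrable_const _).add hint_lin
  have hQval : ∫ t, (c1*(1-t)^2 + c2*(1-t)) ∂ν = B ^ (s-1) := by
    have e : (fun t : ℝ => c1*(1-t)^2 + c2*(1-t))
        = fun t : ℝ => (c1 + c2) + ((-(2*c1) - c2) * t + c1 * t^2) := by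
      funext t; ring
    rw [e, integral_add (integrable_const _) hint_lin,
      integral_add (hint_t.const_mul _) (hint_t2.const_mul _),
      integral_const_mul, integral_const_mul, hm1, hm2, integral_const]
    simp only [measure_univ, probReal_univ, ENNReal.toReal_one, smul_eq_mul, one_mul, mul_zero]
    rw [hc1_def, hc2_def]
    linear_combination (s - 1) * hBs2
  -- pointwise inequality, a.e.
  have hnonneg : 0 ≤ᵐ[ν] fun t : ℝ => (1-t)^s - (c1*(1-t)^2 + c2*(1-t)) := by
    filter_upwards [haeIcc] with t ht
    have := aux_pw_le hs2 hB0 (by linarith [ht.2] : (0:ℝ) ≤ 1 - t)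
    simp only [Pi.zero_apply]
    rw [hc1_def, hc2_def]
    linarith [this]
  have hmono : ∫ t, (c1*(1-t)^2 + c2*(1-t)) ∂ν ≤ ∫ t, (1-t)^s ∂ν := by
    apply integral_mono_ae hint_Q hint_f
    filter_upwards [hnonneg] with t ht
    simpa using ht
  have hzero : ∫ t, ((1-t)^s - (c1*(1-t)^2 + c2*(1-t))) ∂ν = 0 := by
    rw [integral_sub hint_f hint_Q]
    have : ∫ t, (1-t)^s ∂ν = B ^ (s-1) := le_antisymm hle (by rw [← hQval]; exact hmono)
    rw [this, hQval, sub_self]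
  have hae0 : (fun t : ℝ => (1-t)^s - (c1*(1-t)^2 + c2*(1-t))) =ᵐ[ν] 0 :=
    (integral_eq_zero_iff_of_nonneg_ae hnonneg (hint_f.sub hint_Q)).mp hzero
  -- ν is supported on {a, 1}
  have hsupp2 : ∀ᵐ t ∂ν, t ∈ ({a, 1} : Set ℝ) := by
    filter_upwards [haeIcc, hae0] with t ht h0
    by_contra hnot
    simp only [Set.mem_insert_iff, Set.mem_singleton_iff, not_or] at hnot
    have hu : (0:ℝ) < 1 - t := by
      rcases lt_or_eq_of_le ht.2 with h | h
      · linarith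
      · exact absurd h hnot.2
    have hne : (1:ℝ) - t ≠ B := by
      intro h
      apply hnot.1
      rw [ha_def]; rw [hB_def] at h; linarith
    have hlt := aux_pw_lt hs2 hB0 hu hne
    simp only [Pi.zero_apply] at h0
    rw [hc1_def, hc2_def] at h0
    nlinarith [hlt, h0]
  have hS : MeasurableSet ({a, 1} : Set ℝ) :=
    (measurableSet_singleton (1:ℝ)).insert a
  have hν_compl : ν (({a, 1} : Set ℝ))ᶜ = 0 := by
    have h := ae_iff.mp hsupp2
    convert h using 2
    rfl
  have hS1 : ν ({a, 1} : Set ℝ) = 1 := by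
    have h2 := measure_add_measure_compl (μ := ν) hS
    rw [hν_compl, add_zero, measure_univ] at h2
    exact h2
  have hdisj : Disjoint ({a} : Set ℝ) {1} := by
    rw [Set.disjoint_singleton]
    exact hane
  have hunion : ν ({a, 1} : Set ℝ) = ν {a} + ν {1} := by
    rw [show ({a, 1} : Set ℝ) = {a} ∪ {1} from rfl]
    exact measure_union hdisj (measurableSet_singleton 1)
  set l : ℝ := (ν {a}).toReal with hl_def
  set m : ℝ := (ν {1}).toReal with hm_def
  have hofa : ENNReal.ofReal l = ν {a} := ENNReal.ofReal_toReal (measure_ne_top ν _)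
  have hofm : ENNReal.ofReal m = ν {1} := ENNReal.ofReal_toReal (measure_ne_top ν _)
  have hlm : l + m = 1 := by
    have h3 : ν {a} + ν {1} = 1 := by rw [← hunion, hS1]
    have := congrArg ENNReal.toReal h3
    rwa [ENNReal.toReal_add (measure_ne_top ν _) (measure_ne_top ν _), ENNReal.toReal_one] at this
  have hl0 : 0 ≤ l := ENNReal.toReal_nonneg
  have hm0 : 0 ≤ m := ENNReal.toReal_nonneg
  have h1l : (1:ℝ) - l = m := by linarith
  -- the representation
  have hrep : ν = ENNReal.ofReal l • Measure.dirac a + ENNReal.ofReal (1-l) • Measure.dirac 1 := by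
    rw [h1l, hofa, hofm]
    ext S hSm
    rw [Measure.add_apply, Measure.smul_apply, Measure.smul_apply,
      Measure.dirac_apply' _ hSm, Measure.dirac_apply' _ hSm, smul_eq_mul, smul_eq_mul]
    have key : ν S = ν (S ∩ {a, 1}) := by
      have h2 := measure_inter_add_diff (μ := ν) S hS
      have h3 : ν (S \ {a, 1}) = 0 :=
        measure_mono_null (Set.diff_subset_compl S _) hν_compl
      rw [← h2, h3, add_zero]
    rw [key]
    by_cases hA' : a ∈ S <;> by_cases h1' : (1:ℝ) ∈ S
    · have e : S ∩ {a, 1} = {a, 1} := by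
        apply Set.inter_eq_self_of_subset_right
        intro x hx
        rcases hx with h | h
        · rwa [h]
        · rw [Set.mem_singleton_iff] at h; rwa [h]
      rw [e, hunion, Set.indicator_of_mem hA', Set.indicator_of_mem h1']
      simp only [Pi.one_apply, mul_one]
    · have e : S ∩ {a, 1} = {a} := by
        ext x
        simp only [Set.mem_inter_iff, Set.mem_insert_iff, Set.mem_singleton_iff]
        constructor
        · rintro ⟨hxS, h | h⟩
          · exact h
          · exact absurd (h ▸ hxS) h1'
        · rintro rfl; exact ⟨hA', Or.inl rfl⟩
      rw [e, Set.indicator_of_mem hA', Set.indicator_of_notMem h1']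
      simp only [Pi.one_apply, mul_one, mul_zero, add_zero]
    · have e : S ∩ {a, 1} = {1} := by
        ext x
        simp only [Set.mem_inter_iff, Set.mem_insert_iff, Set.mem_singleton_iff]
        constructor
        · rintro ⟨hxS, h | h⟩
          · exact absurd (h ▸ hxS) hA'
          · exact h
        · rintro rfl; exact ⟨h1', Or.inr rfl⟩
      rw [e, Set.indicator_of_notMem hA', Set.indicator_of_mem h1']
      simp only [Pi.one_apply, mul_one, mul_zero, zero_add]
    · have e : S ∩ {a, 1} = ∅ := by
        ext x
        simp only [Set.mem_inter_iff, Set.mem_insert_iff, Set.mem_singleton_iff,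
          Set.mem_empty_iff_false, iff_false, not_and, not_or]
        intro hxS
        constructor
        · rintro rfl; exact hA' hxS
        · rintro rfl; exact h1' hxS
      rw [e, Set.indicator_of_notMem hA', Set.indicator_of_notMem h1']
      simp only [Pi.one_apply, mul_zero, add_zero, measure_empty]
  -- compute l from the first moment
  have hmom : l * a + (1 - l) * 1 = 0 := by
    rw [← hm1, hrep, aux_integral_two_point a 1 l (1-l) hl0 (by linarith) (fun t => t)]
  rw [ha_def] at hmom
  have hkey : l * (1 + A) = 1 := by linarith [hmom]
  have hl_pos : 0 < l := by
    rcases hl0.lt_or_eq with h | h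
    · exact h
    · exfalso; rw [← h, zero_mul] at hkey; exact zero_ne_one hkey
  have hla : 0 < l * A := mul_pos hl_pos hA0
  have hl_lt : l < 1 := by linarith [hkey, hla]
  exact ⟨a, haI, 1, h1I, hane, l, hl_pos, hl_lt, hrep⟩
end

section
/- For every real α > 2 and every t ∈ (0,1), one has the strict inequality 2(1 − t^α) < α (1 − t)(1 + t^{α−1}). -/
open Real Set

lemma aux_G_deriv (α : ℝ) (hα : 2 < α) {s : ℝ} (hs : s ≠ 0) :
    HasDerivAt (fun x : ℝ => (α - 1) * x ^ (α - 2) - (α - 2) * x ^ (α - 1))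
      ((α - 1) * (α - 2) * s ^ (α - 3) * (1 - s)) s := by
  have h1 : HasDerivAt (fun x : ℝ => x ^ (α - 2)) ((α - 2) * s ^ (α - 2 - 1)) s :=
    Real.hasDerivAt_rpow_const (Or.inl hs)
  have h2 : HasDerivAt (fun x : ℝ => x ^ (α - 1)) ((α - 1) * s ^ (α - 1 - 1)) s :=
    Real.hasDerivAt_rpow_const (Or.inl hs)
  have := ((h1.const_mul (α - 1)).sub (h2.const_mul (α - 2)))
  refine this.congr_deriv ?_
  have e1 : α - 2 - 1 = α - 3 := by ring
  have e2 : α - 1 - 1 = α - 2 := by ring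
  have e3 : s ^ (α - 2) = s ^ (α - 3) * s := by
    rw [← Real.rpow_add_one hs]; ring_nf
  rw [e1, e2, e3]; ring

lemma aux_gneg (α : ℝ) (hα : 2 < α) {x : ℝ} (hx0 : 0 < x) (hx1 : x < 1) :
    (α - 1) * x ^ (α - 2) - (α - 2) * x ^ (α - 1) < 1 := by
  set G : ℝ → ℝ := fun x => (α - 1) * x ^ (α - 2) - (α - 2) * x ^ (α - 1) with hG
  have hmono : StrictMonoOn G (Icc x 1) := by
    apply strictMonoOn_of_deriv_pos (convex_Icc x 1)
    · intro s hs
      have hs0 : s ≠ 0 := ne_of_gt (lt_of_lt_of_le hx0 hs.1)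
      exact (aux_G_deriv α hα hs0).continuousAt.continuousWithinAt
    · intro s hs
      rw [interior_Icc] at hs
      have hs0 : 0 < s := lt_trans hx0 hs.1
      rw [(aux_G_deriv α hα hs0.ne').deriv]
      have : 0 < s ^ (α - 3) := Real.rpow_pos_of_pos hs0 _
      have h1 : 0 < α - 1 := by linarith
      have h2 : 0 < α - 2 := by linarith
      have h3 : 0 < 1 - s := by linarith [hs.2]
      positivity
  have := hmono (left_mem_Icc.2 hx1.le) (right_mem_Icc.2 hx1.le) hx1
  have hG1 : G 1 = 1 := by
    simp [hG, Real.one_rpow]; ring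
  have h2 : G x < 1 := hG1 ▸ this
  simpa only [hG] using h2

theorem stmt15 (α t : ℝ) (hα : 2 < α) (ht0 : 0 < t) (ht1 : t < 1) :
    2 * (1 - t ^ α) < α * (1 - t) * (1 + t ^ (α - 1)) := by
  set F : ℝ → ℝ := fun x => α * (1 - x) * (1 + x ^ (α - 1)) + 2 * x ^ α with hF
  have hα0 : (0:ℝ) < α := by linarith
  have hderiv : ∀ s : ℝ, 0 < s →
      HasDerivAt F (α * ((α - 1) * s ^ (α - 2) - (α - 2) * s ^ (α - 1) - 1)) s := by
    intro s hs
    have h1 : HasDerivAt (fun x : ℝ => x ^ (α - 1)) ((α - 1) * s ^ (α - 1 - 1)) s :=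
      Real.hasDerivAt_rpow_const (Or.inl hs.ne')
    have h2 : HasDerivAt (fun x : ℝ => x ^ α) (α * s ^ (α - 1)) s := by
      have := Real.hasDerivAt_rpow_const (x := s) (p := α) (Or.inl hs.ne')
      exact this
    have hlin : HasDerivAt (fun x : ℝ => α * (1 - x)) (-α) s := by
      simpa using ((hasDerivAt_const s (1:ℝ)).sub (hasDerivAt_id s)).const_mul α
    have hone : HasDerivAt (fun x : ℝ => 1 + x ^ (α - 1)) ((α - 1) * s ^ (α - 1 - 1)) s := by
      exact ((hasDerivAt_const s (1:ℝ)).add h1).congr_deriv (by simp)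
    have := (hlin.mul hone).add (h2.const_mul 2)
    refine this.congr_deriv ?_
    have e2 : α - 1 - 1 = α - 2 := by ring
    have e3 : s ^ (α - 1) = s ^ (α - 2) * s := by
      rw [← Real.rpow_add_one hs.ne']; ring_nf
    rw [e2, e3]; ring
  have hanti : StrictAntiOn F (Icc t 1) := by
    apply strictAntiOn_of_deriv_neg (convex_Icc t 1)
    · intro s hs
      have hs0 : 0 < s := lt_of_lt_of_le ht0 hs.1
      exact (hderiv s hs0).continuousAt.continuousWithinAt
    · intro s hs
      rw [interior_Icc] at hs
      have hs0 : 0 < s := lt_trans ht0 hs.1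
      rw [(hderiv s hs0).deriv]
      have := aux_gneg α hα hs0 hs.2
      have : (α - 1) * s ^ (α - 2) - (α - 2) * s ^ (α - 1) - 1 < 0 := by linarith
      exact mul_neg_of_pos_of_neg hα0 this
  have key := hanti (left_mem_Icc.2 ht1.le) (right_mem_Icc.2 ht1.le) ht1
  have hF1 : F 1 = 2 := by simp [hF, Real.one_rpow]
  have : (2:ℝ) < F t := by rw [← hF1]; exact key
  simp only [hF] at this
  linarith
end

section
/- Let p > 4 and A ∈ (0,1]. For every probability measure ν on the interval [−1,1] with ∫ t dν(t) = 0 and ∫ t² dν(t) = A, one has ∫_{-1}^{1} (1−t)^{p/2} dν(t) ≥ (1 + A)^{p/2 − 1}, and equality holds if and only if ν = (A/(1+A)) δ_1 + (1/(1+A)) δ_{−A}. -/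
open MeasureTheory Real

lemma tangent_lt {c s r : ℝ} (hc : 0 < c) (hs : 0 ≤ s) (hne : s ≠ c) (hr : 1 < r) :
    c ^ r + r * c ^ (r - 1) * (s - c) < s ^ r := by
  have hz : (-1 : ℝ) ≤ s / c - 1 := by
    have : 0 ≤ s / c := div_nonneg hs hc.le
    linarith
  have hz0 : s / c - 1 ≠ 0 := by
    intro h
    apply hne
    field_simp at h
    linarith
  have hb := one_add_mul_self_lt_rpow_one_add hz hz0 hr
  rw [show (1 : ℝ) + (s / c - 1) = s / c by ring, Real.div_rpow hs hc.le] at hb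
  have hcr : (0:ℝ) < c ^ r := Real.rpow_pos_of_pos hc r
  have hkey : c ^ r * (1 + r * (s / c - 1)) < s ^ r := by
    calc c ^ r * (1 + r * (s / c - 1)) < c ^ r * (s ^ r / c ^ r) := by
          exact (mul_lt_mul_iff_right₀ hcr).2 hb
      _ = s ^ r := by field_simp
  have hc1 : c ^ (r - 1) = c ^ r / c := by
    rw [Real.rpow_sub hc, Real.rpow_one]
  calc c ^ r + r * c ^ (r - 1) * (s - c) = c ^ r * (1 + r * (s / c - 1)) := by
        rw [hc1]; field_simp
    _ < s ^ r := hkey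

lemma tangent_le {c s r : ℝ} (hc : 0 < c) (hs : 0 ≤ s) (hr : 1 < r) :
    c ^ r + r * c ^ (r - 1) * (s - c) ≤ s ^ r := by
  rcases eq_or_ne s c with rfl | hne
  · simp
  · exact (tangent_lt hc hs hne hr).le

lemma ptwise_le {A r t : ℝ} (hA0 : 0 < A) (hr : 1 < r) (ht : t ≤ 1) :
    (1 - t) * ((1 + A) ^ r - r * (1 + A) ^ (r - 1) * (t + A)) ≤ (1 - t) ^ (r + 1) := by
  set c := 1 + A with hc
  have hcpos : 0 < c := by positivity
  have hs : (0:ℝ) ≤ 1 - t := by linarith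
  have h1 := tangent_le hcpos hs hr
  have h2 : (1 - t) * (c ^ r + r * c ^ (r - 1) * ((1 - t) - c)) ≤ (1 - t) * (1 - t) ^ r :=
    mul_le_mul_of_nonneg_left h1 hs
  have h3 : (1 - t) * (1 - t) ^ r = (1 - t) ^ (r + 1) := by
    rcases eq_or_lt_of_le hs with h | h
    · rw [← h, Real.zero_rpow (by linarith : r + 1 ≠ 0)]; ring
    · rw [Real.rpow_add_one (ne_of_gt h)]; ring
  rw [h3] at h2
  calc (1 - t) * (c ^ r - r * c ^ (r - 1) * (t + A))
      = (1 - t) * (c ^ r + r * c ^ (r - 1) * ((1 - t) - c)) := by rw [hc]; ring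
    _ ≤ (1 - t) ^ (r + 1) := h2

lemma ptwise_lt {A r t : ℝ} (hA0 : 0 < A) (hr : 1 < r) (ht : t < 1) (ht2 : t ≠ -A) :
    (1 - t) * ((1 + A) ^ r - r * (1 + A) ^ (r - 1) * (t + A)) < (1 - t) ^ (r + 1) := by
  set c := 1 + A with hc
  have hcpos : 0 < c := by positivity
  have hs : (0:ℝ) < 1 - t := by linarith
  have hne : 1 - t ≠ c := by
    intro h; apply ht2; rw [hc] at h; linarith
  have h1 := tangent_lt hcpos hs.le hne hr
  have h2 : (1 - t) * (c ^ r + r * c ^ (r - 1) * ((1 - t) - c)) < (1 - t) * (1 - t) ^ r :=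
    (mul_lt_mul_iff_right₀ hs).2 h1
  have h3 : (1 - t) * (1 - t) ^ r = (1 - t) ^ (r + 1) := by
    rw [Real.rpow_add_one (ne_of_gt hs)]; ring
  rw [h3] at h2
  calc (1 - t) * (c ^ r - r * c ^ (r - 1) * (t + A))
      = (1 - t) * (c ^ r + r * c ^ (r - 1) * ((1 - t) - c)) := by rw [hc]; ring
    _ < (1 - t) ^ (r + 1) := h2

lemma integrable_dirac'' {f : ℝ → ℝ} (a : ℝ) : Integrable f (Measure.dirac a) := by
  refine (integrable_const (f a)).congr ?_
  rw [MeasureTheory.ae_dirac_eq]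
  exact Filter.eventually_pure.2 rfl

lemma integral_two_dirac (f : ℝ → ℝ) (a b : ℝ) (c d : ENNReal) (hc : c ≠ ⊤) (hd : d ≠ ⊤) :
    ∫ t, f t ∂(c • Measure.dirac a + d • Measure.dirac b) = c.toReal * f a + d.toReal * f b := by
  rw [integral_add_measure ((integrable_dirac'' a).smul_measure hc)
      ((integrable_dirac'' b).smul_measure hd),
    integral_smul_measure, integral_smul_measure, integral_dirac, integral_dirac,
    smul_eq_mul, smul_eq_mul]

theorem stmt16 (p A : ℝ) (hp : 4 < p) (hA0 : 0 < A) (hA1 : A ≤ 1)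
    (ν : Measure ℝ) [IsProbabilityMeasure ν]
    (hsupp : ν (Set.Icc (-1 : ℝ) 1) = 1)
    (hm1 : (∫ t, t ∂ν) = 0) (hm2 : (∫ t, t ^ 2 ∂ν) = A) :
    (1 + A) ^ (p / 2 - 1) ≤ (∫ t, (1 - t) ^ (p / 2) ∂ν) ∧
    ((∫ t, (1 - t) ^ (p / 2) ∂ν) = (1 + A) ^ (p / 2 - 1) ↔
      ν = ENNReal.ofReal (A / (1 + A)) • Measure.dirac (1 : ℝ) +
          ENNReal.ofReal (1 / (1 + A)) • Measure.dirac (-A)) := by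
  set r : ℝ := p / 2 - 1 with hrdef
  have hr : 1 < r := by rw [hrdef]; linarith
  have hp2 : p / 2 = r + 1 := by rw [hrdef]; ring
  rw [hp2]
  have hcpos : (0:ℝ) < 1 + A := by linarith
  -- a.e. membership in Icc
  have hcompl : ν (Set.Icc (-1:ℝ) 1)ᶜ = 0 := by
    have h := measure_add_measure_compl (μ := ν) (measurableSet_Icc (a := (-1:ℝ)) (b := 1))
    rw [hsupp, measure_univ] at h
    have h' : (1 : ENNReal) + ν (Set.Icc (-1:ℝ) 1)ᶜ = 1 + 0 := by rw [add_zero]; exact h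
    exact (ENNReal.add_right_inj ENNReal.one_ne_top).1 h'
  have hae : ∀ᵐ t ∂ν, t ∈ Set.Icc (-1:ℝ) 1 := by
    rw [ae_iff]
    exact hcompl
  -- integrability
  have hmf : Continuous (fun t : ℝ => (1 - t) ^ (r + 1)) :=
    (Real.continuous_rpow_const (by linarith)).comp (continuous_const.sub continuous_id)
  have hint_f : Integrable (fun t : ℝ => (1 - t) ^ (r + 1)) ν := by
    refine Integrable.mono' (integrable_const ((2:ℝ) ^ (r + 1))) hmf.aestronglyMeasurable ?_
    filter_upwards [hae] with t ht
    rw [Real.norm_eq_abs, abs_of_nonneg (Real.rpow_nonneg (by linarith [ht.2]) _)]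
    exact Real.rpow_le_rpow (by linarith [ht.2]) (by linarith [ht.1]) (by linarith)
  have hint_id : Integrable (fun t : ℝ => t) ν := by
    refine Integrable.mono' (integrable_const (1:ℝ)) aestronglyMeasurable_id ?_
    filter_upwards [hae] with t ht
    rw [Real.norm_eq_abs]; exact abs_le.2 ⟨ht.1, ht.2⟩
  have hint_sq : Integrable (fun t : ℝ => t ^ 2) ν := by
    refine Integrable.mono' (integrable_const (1:ℝ)) (continuous_pow 2).aestronglyMeasurable ?_
    filter_upwards [hae] with t ht
    rw [Real.norm_eq_abs, abs_of_nonneg (sq_nonneg t)]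
    nlinarith [ht.1, ht.2]
  -- the comparison polynomial
  set a0 : ℝ := (1+A)^r - r*(1+A)^(r-1)*A with ha0
  set a1 : ℝ := r*(1+A)^(r-1)*A - r*(1+A)^(r-1) - (1+A)^r with ha1
  set a2 : ℝ := r*(1+A)^(r-1) with ha2
  have hφform : ∀ t : ℝ, a0 + a1*t + a2*t^2
      = (1 - t) * ((1+A)^r - r*(1+A)^(r-1)*(t+A)) := by
    intro t; rw [ha0, ha1, ha2]; ring
  have hint_φ : Integrable (fun t : ℝ => a0 + a1*t + a2*t^2) ν :=
    ((integrable_const a0).add (hint_id.const_mul a1)).add (hint_sq.const_mul a2)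
  have i1 : Integrable (fun t : ℝ => a0 + a1 * t) ν :=
    (integrable_const a0).add (hint_id.const_mul a1)
  have i2 : Integrable (fun t : ℝ => a2 * t ^ 2) ν := hint_sq.const_mul a2
  have i3 : Integrable (fun t : ℝ => a1 * t) ν := hint_id.const_mul a1
  have hφint : ∫ t, (a0 + a1*t + a2*t^2) ∂ν = (1+A)^r := by
    rw [integral_add i1 i2, integral_add (integrable_const a0) i3,
        integral_const_mul, integral_const_mul, hm1, hm2, integral_const]
    simp only [measure_univ, ENNReal.toReal_one, probReal_univ, one_smul, smul_eq_mul, mul_one, mul_zero, add_zero]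
    rw [ha0, ha2]; ring
  -- lower bound
  have hlow : (1+A)^r ≤ ∫ t, (1 - t) ^ (r+1) ∂ν := by
    rw [← hφint]
    refine integral_mono_ae hint_φ hint_f ?_
    filter_upwards [hae] with t ht
    rw [hφform t]
    exact ptwise_le hA0 hr ht.2
  refine ⟨hlow, ?_, ?_⟩
  · -- equality implies the measure is the two-point one
    intro hEq
    have hz_nonneg : 0 ≤ᵐ[ν] fun t => (1-t)^(r+1) - (a0+a1*t+a2*t^2) := by
      filter_upwards [hae] with t ht
      have := ptwise_le hA0 hr ht.2
      rw [← hφform t] at this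
      simp only [Pi.zero_apply]
      linarith
    have hz0 : ∫ t, ((1-t)^(r+1) - (a0+a1*t+a2*t^2)) ∂ν = 0 := by
      rw [integral_sub hint_f hint_φ, hEq, hφint, sub_self]
    have hz := (integral_eq_zero_iff_of_nonneg_ae hz_nonneg (hint_f.sub hint_φ)).1 hz0
    have hmem : ∀ᵐ t ∂ν, t ∈ ({1, -A} : Set ℝ) := by
      filter_upwards [hae, hz] with t ht hzt
      by_contra hcon
      simp only [Set.mem_insert_iff, Set.mem_singleton_iff, not_or] at hcon
      have hlt := ptwise_lt hA0 hr (lt_of_le_of_ne ht.2 hcon.1) hcon.2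
      rw [← hφform t] at hlt
      simp only [Pi.zero_apply] at hzt
      linarith
    have hnull : ν ({1, -A} : Set ℝ)ᶜ = 0 := by
      rw [ae_iff] at hmem
      exact hmem
    have hSm : MeasurableSet ({1, -A} : Set ℝ) :=
      (measurableSet_singleton (-A)).insert 1
    have hS1 : ν ({1, -A} : Set ℝ) = 1 := by
      have h := measure_add_measure_compl (μ := ν) hSm
      rw [hnull, add_zero, measure_univ] at h
      exact h
    have hne1A : (1:ℝ) ≠ -A := by intro h; linarith
    have hdisj : Disjoint ({1} : Set ℝ) {-A} := Set.disjoint_singleton.2 hne1A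
    have hab : ν {(1:ℝ)} + ν {(-A:ℝ)} = 1 := by
      rw [← measure_union hdisj (measurableSet_singleton _), Set.singleton_union]
      exact hS1
    have ha_top : ν {(1:ℝ)} ≠ ⊤ := (measure_lt_top ν _).ne
    have hb_top : ν {(-A:ℝ)} ≠ ⊤ := (measure_lt_top ν _).ne
    have hdecomp : ν = ν {(1:ℝ)} • Measure.dirac (1:ℝ) + ν {(-A:ℝ)} • Measure.dirac (-A) := by
      ext s hs
      rw [Measure.add_apply, Measure.smul_apply, Measure.smul_apply,
        Measure.dirac_apply' _ hs, Measure.dirac_apply' _ hs]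
      have h0 : ν s = ν (s ∩ ({1, -A} : Set ℝ)) := (measure_inter_conull hnull).symm
      rw [h0]
      by_cases h1 : (1:ℝ) ∈ s <;> by_cases h2 : (-A:ℝ) ∈ s
      · have hss : s ∩ ({1, -A} : Set ℝ) = {1, -A} :=
          Set.inter_eq_right.2 (by
            intro x hx
            rcases hx with rfl | hx
            · exact h1
            · rw [Set.mem_singleton_iff] at hx; rw [hx]; exact h2)
        rw [hss, Set.indicator_of_mem h1, Set.indicator_of_mem h2,
          ← Set.singleton_union, measure_union hdisj (measurableSet_singleton _)]
        simp [smul_eq_mul]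
      · have hss : s ∩ ({1, -A} : Set ℝ) = {1} := by
          ext x
          simp only [Set.mem_inter_iff, Set.mem_insert_iff, Set.mem_singleton_iff]
          constructor
          · rintro ⟨hxs, rfl | rfl⟩
            · rfl
            · exact absurd hxs h2
          · rintro rfl; exact ⟨h1, Or.inl rfl⟩
        rw [hss, Set.indicator_of_mem h1, Set.indicator_of_notMem h2]
        simp [smul_eq_mul]
      · have hss : s ∩ ({1, -A} : Set ℝ) = {-A} := by
          ext x
          simp only [Set.mem_inter_iff, Set.mem_insert_iff, Set.mem_singleton_iff]
          constructor
          · rintro ⟨hxs, rfl | rfl⟩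
            · exact absurd hxs h1
            · rfl
          · rintro rfl; exact ⟨h2, Or.inr rfl⟩
        rw [hss, Set.indicator_of_notMem h1, Set.indicator_of_mem h2]
        simp [smul_eq_mul]
      · have hss : s ∩ ({1, -A} : Set ℝ) = ∅ := by
          ext x
          simp only [Set.mem_inter_iff, Set.mem_insert_iff, Set.mem_singleton_iff,
            Set.mem_empty_iff_false, iff_false, not_and, not_or]
          rintro hxs
          constructor
          · rintro rfl; exact h1 hxs
          · rintro rfl; exact h2 hxs
        rw [hss, Set.indicator_of_notMem h1, Set.indicator_of_notMem h2]
        simp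
    -- compute masses from first moment
    have hm1' := hm1
    rw [hdecomp, integral_two_dirac (fun t => t) 1 (-A) _ _ ha_top hb_top] at hm1'
    have htot : (ν {(1:ℝ)}).toReal + (ν {(-A:ℝ)}).toReal = 1 := by
      have h := congrArg ENNReal.toReal hab
      rwa [ENNReal.toReal_add ha_top hb_top, ENNReal.toReal_one] at h
    have hx : (ν {(1:ℝ)}).toReal = A / (1 + A) := by
      rw [eq_div_iff (ne_of_gt hcpos)]
      nlinarith [hm1', htot]
    have hy : (ν {(-A:ℝ)}).toReal = 1 / (1 + A) := by
      rw [eq_div_iff (ne_of_gt hcpos)]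
      nlinarith [hm1', htot]
    have haval : ν {(1:ℝ)} = ENNReal.ofReal (A / (1 + A)) := by
      rw [← hx, ENNReal.ofReal_toReal ha_top]
    have hbval : ν {(-A:ℝ)} = ENNReal.ofReal (1 / (1 + A)) := by
      rw [← hy, ENNReal.ofReal_toReal hb_top]
    rw [haval, hbval] at hdecomp
    exact hdecomp
  · -- the two point measure attains equality
    intro hν
    rw [hν, integral_two_dirac _ 1 (-A) _ _ ENNReal.ofReal_ne_top ENNReal.ofReal_ne_top,
      ENNReal.toReal_ofReal (by positivity), ENNReal.toReal_ofReal (by positivity)]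
    have e1 : ((1:ℝ) - 1) ^ (r+1) = 0 := by
      rw [sub_self, Real.zero_rpow (by linarith)]
    have e2 : ((1:ℝ) - (-A)) ^ (r+1) = (1+A)^r * (1+A) := by
      rw [show (1:ℝ) - (-A) = 1 + A by ring, Real.rpow_add_one (ne_of_gt hcpos)]
    rw [e1, e2]
    field_simp
    ring
end

section
/- Let n ≥ 2 and p > 4. For every probability measure μ on the unit sphere S^{n-1} ⊂ ℝ^n with zero barycenter, one has J_p(μ) ≥ 2^{p/2} (1 + 1/n)^{p/2 − 1}. -/
open MeasureTheory Metric
open scoped ENNReal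

open scoped RealInnerProductSpace

private lemma bern_aux {q x : ℝ} (hq : 2 ≤ q) (hx : 0 ≤ x) :
    (q - 1) * x ^ 2 + (2 - q) * x ≤ x ^ q := by
  rcases eq_or_lt_of_le hx with h0 | h0
  · rw [← h0, Real.zero_rpow (by linarith : q ≠ 0)]
    norm_num
  · have hb : 1 + (q - 1) * (x - 1) ≤ x ^ (q - 1) := by
      have h := one_add_mul_self_le_rpow_one_add (by linarith : (-1:ℝ) ≤ x - 1)
        (by linarith : (1:ℝ) ≤ q - 1)
      have hx1 : (1:ℝ) + (x - 1) = x := by ring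
      rwa [hx1] at h
    have h2 := mul_le_mul_of_nonneg_left hb hx
    have h3 := (Real.rpow_add h0 1 (q - 1)).symm
    rw [Real.rpow_one, show (1:ℝ) + (q - 1) = q from by ring] at h3
    calc (q - 1) * x ^ 2 + (2 - q) * x = x * (1 + (q - 1) * (x - 1)) := by ring
      _ ≤ x * x ^ (q - 1) := h2
      _ = x ^ q := h3

private lemma key_ineq_s17 {q u₀ u : ℝ} (hq : 2 ≤ q) (hu₀ : 0 < u₀) (hu : 0 ≤ u) :
    u₀ ^ q + q * u₀ ^ (q - 1) * (u - u₀) + (q - 1) * u₀ ^ (q - 2) * (u - u₀) ^ 2 ≤ u ^ q := by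
  set x := u / u₀ with hx
  have hx0 : 0 ≤ x := div_nonneg hu hu₀.le
  have hux : u = u₀ * x := by rw [hx]; field_simp
  have h1 : u ^ q = u₀ ^ q * x ^ q := by rw [hux, Real.mul_rpow hu₀.le hx0]
  have h2 : u₀ ^ (q - 1) = u₀ ^ q / u₀ := by rw [Real.rpow_sub hu₀, Real.rpow_one]
  have h3 : u₀ ^ (q - 2) = u₀ ^ q / u₀ ^ 2 := by
    rw [Real.rpow_sub hu₀, Real.rpow_two]
  have hq0 : (0:ℝ) < u₀ ^ q := Real.rpow_pos_of_pos hu₀ q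
  have hb := bern_aux hq hx0
  have hne : u₀ ≠ 0 := hu₀.ne'
  calc u₀ ^ q + q * u₀ ^ (q - 1) * (u - u₀) + (q - 1) * u₀ ^ (q - 2) * (u - u₀) ^ 2
      = u₀ ^ q * ((q - 1) * x ^ 2 + (2 - q) * x) := by
        rw [h2, h3, hux]; field_simp; ring
    _ ≤ u₀ ^ q * x ^ q := mul_le_mul_of_nonneg_left hb hq0.le
    _ = u ^ q := h1.symm

/-- The second-moment matrix `M i j = ∫ w_i w_j dμ(w)`. -/
noncomputable def Mmat (n : ℕ) (μ : Measure (sphere (0 : EuclideanSpace ℝ (Fin n)) 1))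
    (i j : Fin n) : ℝ :=
  ∫ w, (w : EuclideanSpace ℝ (Fin n)) i * (w : EuclideanSpace ℝ (Fin n)) j ∂μ

/-- The quadratic form `v ↦ ∑_{i,j} v_i v_j M_{ij}`. -/
noncomputable def Rfun (n : ℕ) (μ : Measure (sphere (0 : EuclideanSpace ℝ (Fin n)) 1))
    (v : sphere (0 : EuclideanSpace ℝ (Fin n)) 1) : ℝ :=
  ∑ i, ∑ j, ((v : EuclideanSpace ℝ (Fin n)) i * (v : EuclideanSpace ℝ (Fin n)) j) * Mmat n μ i j

theorem stmt17 (n : ℕ) (hn : 2 ≤ n) (p : ℝ) (hp : 4 < p)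
    (μ : Measure (sphere (0 : EuclideanSpace ℝ (Fin n)) 1)) [IsProbabilityMeasure μ]
    (hbary : (∫ v, (v : EuclideanSpace ℝ (Fin n)) ∂μ) = 0) :
    2 ^ (p / 2) * (1 + 1 / n) ^ (p / 2 - 1) ≤ Jp n p μ := by
  classical
  have hnpos : 0 < n := by omega
  have hn0 : (0:ℝ) < (n:ℝ) := by exact_mod_cast hnpos
  have hnne : (n:ℝ) ≠ 0 := hn0.ne'
  set q := p / 2 with hq_def
  have hq2 : (2:ℝ) ≤ q := by rw [hq_def]; linarith
  have hq0 : (0:ℝ) < q := by linarith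
  set u₀ : ℝ := 2 + 2 / (n:ℝ) with hu0_def
  have hu₀ : (0:ℝ) < u₀ := by rw [hu0_def]; positivity
  set A : ℝ := (q - 1) * u₀ ^ (q - 2) with hA_def
  set B : ℝ := q * u₀ ^ (q - 1) with hB_def
  set C : ℝ := u₀ ^ q with hC_def
  set a : ℝ := C - (2 / (n:ℝ)) * B + (4 / (n:ℝ)^2) * A with ha_def
  set b : ℝ := -2 * B + (8 / (n:ℝ)) * A with hb_def
  set c : ℝ := 4 * A with hc_def
  have hA0 : 0 ≤ A := by
    rw [hA_def]; exact mul_nonneg (by linarith) (Real.rpow_nonneg hu₀.le _)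
  have hc0 : 0 ≤ c := by rw [hc_def]; linarith
  -- basic helpers
  have hint : ∀ {f : (sphere (0 : EuclideanSpace ℝ (Fin n)) 1) → ℝ},
      Continuous f → Integrable f μ :=
    fun {f} hf => hf.integrable_of_hasCompactSupport (HasCompactSupport.of_compactSpace _)
  have hcoord : ∀ i : Fin n, Continuous fun v : sphere (0 : EuclideanSpace ℝ (Fin n)) 1 =>
      (v : EuclideanSpace ℝ (Fin n)) i := fun i =>
    (EuclideanSpace.proj (𝕜 := ℝ) i).continuous.comp continuous_subtype_val
  have hKcont : ∀ v : sphere (0 : EuclideanSpace ℝ (Fin n)) 1,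
      Continuous fun w : sphere (0 : EuclideanSpace ℝ (Fin n)) 1 =>
        ⟪(v : EuclideanSpace ℝ (Fin n)), (w : EuclideanSpace ℝ (Fin n))⟫ := fun v =>
    Continuous.inner continuous_const continuous_subtype_val
  have hnorm : ∀ v : sphere (0 : EuclideanSpace ℝ (Fin n)) 1,
      ‖(v : EuclideanSpace ℝ (Fin n))‖ = 1 := fun v => mem_sphere_zero_iff_norm.mp v.2
  have hsq : ∀ v w : sphere (0 : EuclideanSpace ℝ (Fin n)) 1,
      ‖(v : EuclideanSpace ℝ (Fin n)) - (w : EuclideanSpace ℝ (Fin n))‖ ^ 2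
        = 2 - 2 * ⟪(v : EuclideanSpace ℝ (Fin n)), (w : EuclideanSpace ℝ (Fin n))⟫ := by
    intro v w
    rw [norm_sub_sq_real, hnorm v, hnorm w]; ring
  have hunn : ∀ v w : sphere (0 : EuclideanSpace ℝ (Fin n)) 1,
      0 ≤ 2 - 2 * ⟪(v : EuclideanSpace ℝ (Fin n)), (w : EuclideanSpace ℝ (Fin n))⟫ := by
    intro v w; rw [← hsq v w]; positivity
  have hrpow : ∀ v w : sphere (0 : EuclideanSpace ℝ (Fin n)) 1,
      ‖(v : EuclideanSpace ℝ (Fin n)) - (w : EuclideanSpace ℝ (Fin n))‖ ^ p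
        = (2 - 2 * ⟪(v : EuclideanSpace ℝ (Fin n)), (w : EuclideanSpace ℝ (Fin n))⟫) ^ q := by
    intro v w
    have h2q : 2 * q = p := by rw [hq_def]; ring
    rw [← hsq v w, ← Real.rpow_two, ← Real.rpow_mul (norm_nonneg _), h2q]
  -- the pointwise quadratic lower bound
  have hpoint : ∀ v w : sphere (0 : EuclideanSpace ℝ (Fin n)) 1,
      a + b * ⟪(v : EuclideanSpace ℝ (Fin n)), (w : EuclideanSpace ℝ (Fin n))⟫
        + c * ⟪(v : EuclideanSpace ℝ (Fin n)), (w : EuclideanSpace ℝ (Fin n))⟫ ^ 2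
        ≤ ‖(v : EuclideanSpace ℝ (Fin n)) - (w : EuclideanSpace ℝ (Fin n))‖ ^ p := by
    intro v w
    rw [hrpow v w]
    refine le_trans (le_of_eq ?_) (key_ineq_s17 hq2 hu₀ (hunn v w))
    rw [ha_def, hb_def, hc_def, hA_def, hB_def, hC_def, hu0_def]
    ring
  -- first moment vanishes
  have hwint : Integrable (fun w : sphere (0 : EuclideanSpace ℝ (Fin n)) 1 =>
      (w : EuclideanSpace ℝ (Fin n))) μ :=
    continuous_subtype_val.integrable_of_hasCompactSupport (HasCompactSupport.of_compactSpace _)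
  have hmean : ∀ v : sphere (0 : EuclideanSpace ℝ (Fin n)) 1,
      ∫ w, ⟪(v : EuclideanSpace ℝ (Fin n)), (w : EuclideanSpace ℝ (Fin n))⟫ ∂μ = 0 := by
    intro v
    rw [integral_inner hwint, hbary, inner_zero_right]
  -- inner-product expansion
  have hinner_sum : ∀ v w : sphere (0 : EuclideanSpace ℝ (Fin n)) 1,
      ⟪(v : EuclideanSpace ℝ (Fin n)), (w : EuclideanSpace ℝ (Fin n))⟫
        = ∑ i, (v : EuclideanSpace ℝ (Fin n)) i * (w : EuclideanSpace ℝ (Fin n)) i := fun v w => by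
    simp [PiLp.inner_apply, RCLike.inner_apply, conj_trivial, mul_comm]
  have hijint : ∀ i j : Fin n, Integrable (fun w : sphere (0 : EuclideanSpace ℝ (Fin n)) 1 =>
      (w : EuclideanSpace ℝ (Fin n)) i * (w : EuclideanSpace ℝ (Fin n)) j) μ :=
    fun i j => hint ((hcoord i).mul (hcoord j))
  -- second moment identity
  have hQ : ∀ v : sphere (0 : EuclideanSpace ℝ (Fin n)) 1,
      ∫ w, ⟪(v : EuclideanSpace ℝ (Fin n)), (w : EuclideanSpace ℝ (Fin n))⟫ ^ 2 ∂μ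
        = Rfun n μ v := by
    intro v
    have hexp : ∀ w : sphere (0 : EuclideanSpace ℝ (Fin n)) 1,
        ⟪(v : EuclideanSpace ℝ (Fin n)), (w : EuclideanSpace ℝ (Fin n))⟫ ^ 2
          = ∑ i, ∑ j, ((v : EuclideanSpace ℝ (Fin n)) i * (v : EuclideanSpace ℝ (Fin n)) j)
              * ((w : EuclideanSpace ℝ (Fin n)) i * (w : EuclideanSpace ℝ (Fin n)) j) := by
      intro w
      rw [hinner_sum v w, sq, Finset.sum_mul_sum]
      exact Finset.sum_congr rfl fun i _ => Finset.sum_congr rfl fun j _ => by ring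
    calc ∫ w, ⟪(v : EuclideanSpace ℝ (Fin n)), (w : EuclideanSpace ℝ (Fin n))⟫ ^ 2 ∂μ
        = ∫ w, ∑ i, ∑ j, ((v : EuclideanSpace ℝ (Fin n)) i * (v : EuclideanSpace ℝ (Fin n)) j)
            * ((w : EuclideanSpace ℝ (Fin n)) i * (w : EuclideanSpace ℝ (Fin n)) j) ∂μ :=
          integral_congr_ae (.of_forall hexp)
      _ = Rfun n μ v := by
          rw [integral_finset_sum _ fun i _ =>
            integrable_finset_sum _ fun j _ => (hijint i j).const_mul _]
          refine Finset.sum_congr rfl fun i _ => ?_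
          rw [integral_finset_sum _ fun j _ => (hijint i j).const_mul _]
          exact Finset.sum_congr rfl fun j _ => integral_const_mul _ _
  -- the quadratic form is continuous and its integral is the Frobenius norm of M
  have hRcont : Continuous (Rfun n μ) := by
    unfold Rfun
    refine continuous_finset_sum _ fun i _ => continuous_finset_sum _ fun j _ => ?_
    exact ((hcoord i).mul (hcoord j)).mul continuous_const
  have hI2 : ∫ v, Rfun n μ v ∂μ = ∑ i, ∑ j, (Mmat n μ i j) ^ 2 := by
    unfold Rfun
    rw [integral_finset_sum _ fun i _ =>
      integrable_finset_sum _ fun j _ => (hijint i j).mul_const _]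
    refine Finset.sum_congr rfl fun i _ => ?_
    rw [integral_finset_sum _ fun j _ => (hijint i j).mul_const _]
    refine Finset.sum_congr rfl fun j _ => ?_
    rw [integral_mul_const, pow_two]
    rfl
  -- trace of M is 1
  have htrace : ∑ i, Mmat n μ i i = 1 := by
    have hone : ∀ w : sphere (0 : EuclideanSpace ℝ (Fin n)) 1,
        ∑ i, (w : EuclideanSpace ℝ (Fin n)) i * (w : EuclideanSpace ℝ (Fin n)) i = 1 := by
      intro w
      have h2 := hinner_sum w w
      rw [real_inner_self_eq_norm_sq, hnorm w] at h2
      rw [← h2]; norm_num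
    calc ∑ i, Mmat n μ i i
        = ∫ w, ∑ i, (w : EuclideanSpace ℝ (Fin n)) i * (w : EuclideanSpace ℝ (Fin n)) i ∂μ :=
          (integral_finset_sum _ fun i _ => hijint i i).symm
      _ = ∫ _w, (1:ℝ) ∂μ := integral_congr_ae (.of_forall hone)
      _ = 1 := by simp
  -- Cauchy-Schwarz for the trace
  have hCS : 1 / (n:ℝ) ≤ ∑ i, ∑ j, (Mmat n μ i j) ^ 2 := by
    have h1 : (∑ i, Mmat n μ i i) ^ 2
        ≤ ((Finset.univ : Finset (Fin n)).card : ℝ) * ∑ i, (Mmat n μ i i) ^ 2 :=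
      sq_sum_le_card_mul_sum_sq
    rw [htrace, Finset.card_univ, Fintype.card_fin] at h1
    have h2 : ∑ i, (Mmat n μ i i) ^ 2 ≤ ∑ i, ∑ j, (Mmat n μ i j) ^ 2 :=
      Finset.sum_le_sum fun i _ =>
        Finset.single_le_sum (f := fun j => (Mmat n μ i j) ^ 2)
          (fun j _ => sq_nonneg _) (Finset.mem_univ i)
    rw [div_le_iff₀ hn0]
    nlinarith
  -- inner integral of the quadratic lower bound
  have hinnerInt : ∀ v : sphere (0 : EuclideanSpace ℝ (Fin n)) 1,
      ∫ w, (a + b * ⟪(v : EuclideanSpace ℝ (Fin n)), (w : EuclideanSpace ℝ (Fin n))⟫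
        + c * ⟪(v : EuclideanSpace ℝ (Fin n)), (w : EuclideanSpace ℝ (Fin n))⟫ ^ 2) ∂μ
        = a + c * Rfun n μ v := by
    intro v
    have i1 : Integrable (fun w : sphere (0 : EuclideanSpace ℝ (Fin n)) 1 =>
        b * ⟪(v : EuclideanSpace ℝ (Fin n)), (w : EuclideanSpace ℝ (Fin n))⟫) μ :=
      (hint (hKcont v)).const_mul b
    have i2 : Integrable (fun w : sphere (0 : EuclideanSpace ℝ (Fin n)) 1 =>
        c * ⟪(v : EuclideanSpace ℝ (Fin n)), (w : EuclideanSpace ℝ (Fin n))⟫ ^ 2) μ :=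
      (hint ((hKcont v).pow 2)).const_mul c
    have i12 : Integrable (fun w : sphere (0 : EuclideanSpace ℝ (Fin n)) 1 =>
        a + b * ⟪(v : EuclideanSpace ℝ (Fin n)), (w : EuclideanSpace ℝ (Fin n))⟫) μ :=
      (integrable_const a).add i1
    rw [integral_add i12 i2, integral_add (integrable_const a) i1,
      integral_const, integral_const_mul, integral_const_mul, hmean v, hQ v]
    simp
  -- the target constant
  have hX : (2:ℝ) ^ (q-1) * (1 + 1/(n:ℝ)) ^ (q-1) = u₀ ^ (q-1) := by
    rw [← Real.mul_rpow (by norm_num) (by positivity)]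
    congr 1
    rw [hu0_def]; ring
  have h2q : (2:ℝ) ^ q = 2 * 2 ^ (q-1) := by
    have h := Real.rpow_sub (by norm_num : (0:ℝ) < 2) q 1
    rw [Real.rpow_one] at h
    rw [h]; ring
  have htarget : (2:ℝ) ^ q * (1 + 1/(n:ℝ)) ^ (q-1) = a + c * (1/(n:ℝ)) := by
    have e2 : u₀ ^ (q-2) = u₀ ^ (q-1) / u₀ := by
      rw [show q - 2 = q - 1 - 1 from by ring, Real.rpow_sub hu₀, Real.rpow_one]
    have e1 : u₀ ^ q = u₀ ^ (q-1) * u₀ := by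
      have h := Real.rpow_sub hu₀ q 1
      rw [Real.rpow_one] at h
      rw [h]; field_simp
    have h20 : (2:ℝ) + 2/(n:ℝ) ≠ 0 := by positivity
    rw [h2q, mul_assoc, hX, ha_def, hc_def, hA_def, hB_def, hC_def, e1, e2, hu0_def]
    field_simp
    ring
  -- outer integrability of the upper function via the product measure
  have hGint : Integrable (fun z : (sphere (0 : EuclideanSpace ℝ (Fin n)) 1) ×
      (sphere (0 : EuclideanSpace ℝ (Fin n)) 1) =>
        ‖(z.1 : EuclideanSpace ℝ (Fin n)) - (z.2 : EuclideanSpace ℝ (Fin n))‖ ^ p)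
      (μ.prod μ) := by
    refine Continuous.integrable_of_hasCompactSupport ?_ (HasCompactSupport.of_compactSpace _)
    exact (Real.continuous_rpow_const (by linarith)).comp
      (((continuous_subtype_val.comp continuous_fst).sub
        (continuous_subtype_val.comp continuous_snd)).norm)
  have hout_int : Integrable (fun v : sphere (0 : EuclideanSpace ℝ (Fin n)) 1 =>
      ∫ w, ‖(v : EuclideanSpace ℝ (Fin n)) - (w : EuclideanSpace ℝ (Fin n))‖ ^ p ∂μ) μ :=
    hGint.integral_prod_left
  -- putting everything together
  calc 2 ^ q * (1 + 1/(n:ℝ)) ^ (q-1)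
      = a + c * (1/(n:ℝ)) := htarget
    _ ≤ a + c * (∑ i, ∑ j, (Mmat n μ i j) ^ 2) := by
        have := mul_le_mul_of_nonneg_left hCS hc0
        linarith
    _ = ∫ v, (a + c * Rfun n μ v) ∂μ := by
        rw [integral_add (integrable_const a) ((hint hRcont).const_mul c),
          integral_const, integral_const_mul, hI2]
        simp
    _ ≤ ∫ v, (∫ w, ‖(v : EuclideanSpace ℝ (Fin n)) - (w : EuclideanSpace ℝ (Fin n))‖ ^ p ∂μ) ∂μ := by
        refine integral_mono ((integrable_const a).add ((hint hRcont).const_mul c)) hout_int ?_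
        intro v
        show a + c * Rfun n μ v ≤ ∫ w, ‖(v : EuclideanSpace ℝ (Fin n)) - (w : EuclideanSpace ℝ (Fin n))‖ ^ p ∂μ
        rw [← hinnerInt v]
        refine integral_mono ?_ (hint ?_) (fun w => hpoint v w)
        · exact ((integrable_const a).add ((hint (hKcont v)).const_mul b)).add
            ((hint ((hKcont v).pow 2)).const_mul c)
        · exact (Real.continuous_rpow_const (by linarith)).comp
            ((continuous_const.sub continuous_subtype_val).norm)
    _ = Jp n p μ := rfl
end

section
/- Let n ≥ 2, p > 4 and L > 0. Let τ : [0, L] → S^{n-1} ⊂ ℝ^n be a measurable unit tangent field of a closed curve, i.e., a measurable map with ‖τ(s)‖ = 1 for all s and ∫_0^L τ(s) ds = 0 (Bochner integral in ℝ^n). Then the oscillation energy satisfies ∬_{[0,L]×[0,L]} ‖τ(s) − τ(t)‖^p ds dt ≥ 2^{p/2} (1 + 1/n)^{p/2 − 1} L². -/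
open MeasureTheory

theorem stmt19 (n : ℕ) (hn : 2 ≤ n) (p L : ℝ) (hp : 4 < p) (hL : 0 < L)
    (τ : ℝ → EuclideanSpace ℝ (Fin n)) (hmeas : Measurable τ)
    (hunit : ∀ s ∈ Set.Icc (0 : ℝ) L, ‖τ s‖ = 1)
    (hclosed : (∫ s in Set.Icc (0 : ℝ) L, τ s) = 0) :
    2 ^ (p / 2) * (1 + 1 / (n : ℝ)) ^ (p / 2 - 1) * L ^ 2 ≤
      ∫ s in Set.Icc (0 : ℝ) L, ∫ t in Set.Icc (0 : ℝ) L, ‖τ s - τ t‖ ^ p := by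
  have hn0 : (0:ℝ) < n := by exact_mod_cast Nat.pos_of_ne_zero (by omega)
  set μ : Measure ℝ := volume.restrict (Set.Icc (0:ℝ) L) with hμdef
  set ν : Measure (ℝ × ℝ) := μ.prod μ with hνdef
  have hμuniv : μ Set.univ = ENNReal.ofReal L := by
    rw [hμdef, Measure.restrict_apply_univ, Real.volume_Icc, sub_zero]
  have hfin : IsFiniteMeasure μ := ⟨by rw [hμuniv]; exact ENNReal.ofReal_lt_top⟩
  have hμL : (μ Set.univ).toReal = L := by rw [hμuniv, ENNReal.toReal_ofReal hL.le]
  have hνL : (ν Set.univ).toReal = L ^ 2 := by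
    rw [hνdef, ← Set.univ_prod_univ, Measure.prod_prod, hμuniv, ← ENNReal.ofReal_mul hL.le,
      ENNReal.toReal_ofReal (by positivity), sq]
  have hae1 : ∀ᵐ s ∂μ, ‖τ s‖ = 1 :=
    (ae_restrict_mem measurableSet_Icc).mono fun s hs => hunit s hs
  have haeprod : ∀ᵐ z : ℝ × ℝ ∂ν, ‖τ z.1‖ = 1 ∧ ‖τ z.2‖ = 1 := by
    have : ν = (volume.prod volume).restrict
        ((Set.Icc (0:ℝ) L) ×ˢ (Set.Icc (0:ℝ) L)) := by
      rw [hνdef, hμdef, Measure.prod_restrict]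
    rw [this]
    refine (ae_restrict_mem (measurableSet_Icc.prod measurableSet_Icc)).mono fun z hz => ?_
    exact ⟨hunit _ hz.1, hunit _ hz.2⟩
  -- coordinates
  have hco : ∀ i, Measurable fun s => τ s i := fun i => ((measurable_pi_apply i).comp (WithLp.measurable_ofLp 2 _)).comp hmeas
  have habs : ∀ (x : EuclideanSpace ℝ (Fin n)) i, |x i| ≤ ‖x‖ := by
    intro x i
    rw [EuclideanSpace.norm_eq, ← Real.sqrt_sq_eq_abs]
    refine Real.sqrt_le_sqrt ?_
    refine Finset.single_le_sum (f := fun j => ‖x j‖ ^ 2) (fun j _ => by positivity)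
      (Finset.mem_univ i) |>.trans_eq' ?_
    rw [Real.norm_eq_abs, sq_abs]
  have hτint : Integrable τ μ :=
    (integrable_const (1:ℝ)).mono' hmeas.aestronglyMeasurable (hae1.mono fun s h => h.le)
  have hinner : ∀ x y : EuclideanSpace ℝ (Fin n), (inner ℝ x y) = ∑ i, x i * y i := by
    intro x y; simp [PiLp.inner_apply, RCLike.inner_apply]
    exact Finset.sum_congr rfl fun i _ => mul_comm _ _
  have hhm : Measurable fun z : ℝ × ℝ => (inner ℝ (τ z.1) (τ z.2)) :=
    (hmeas.comp measurable_fst).inner (hmeas.comp measurable_snd)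
  have hhbd : ∀ᵐ z : ℝ × ℝ ∂ν, ‖(inner ℝ (τ z.1) (τ z.2))‖ ≤ 1 := by
    filter_upwards [haeprod] with z hz
    calc ‖(inner ℝ (τ z.1) (τ z.2))‖ ≤ ‖τ z.1‖ * ‖τ z.2‖ := norm_inner_le_norm _ _
    _ = 1 := by rw [hz.1, hz.2, one_mul]
  have hhint : Integrable (fun z : ℝ × ℝ => (inner ℝ (τ z.1) (τ z.2))) ν :=
    (integrable_const (1:ℝ)).mono' hhm.aestronglyMeasurable hhbd
  have hh2int : Integrable (fun z : ℝ × ℝ => (inner ℝ (τ z.1) (τ z.2)) ^ 2) ν := by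
    refine (integrable_const (1:ℝ)).mono' ((hhm.pow_const 2).aestronglyMeasurable) ?_
    filter_upwards [hhbd] with z hz
    rw [norm_pow]
    calc ‖(inner ℝ (τ z.1) (τ z.2))‖ ^ 2 ≤ 1 ^ 2 := by
          exact pow_le_pow_left₀ (norm_nonneg _) hz 2
    _ = 1 := one_pow 2
  -- Step A : double integral of inner is zero
  have hA : ∫ z, (inner ℝ (τ z.1) (τ z.2)) ∂ν = 0 := by
    rw [hνdef, integral_prod _ (hνdef ▸ hhint)]
    have h1 : ∀ s, ∫ t, (inner ℝ (τ s) (τ t)) ∂μ = 0 := by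
      intro s
      rw [integral_inner hτint, hclosed, inner_zero_right]
    simp only [h1, integral_zero]
  -- Step C : second moment of inner is at least L^2 / n
  have hC : L ^ 2 / n ≤ ∫ z, (inner ℝ (τ z.1) (τ z.2)) ^ 2 ∂ν := by
    set B : Fin n → Fin n → ℝ := fun i j => ∫ s, τ s i * τ s j ∂μ with hBdef
    have hijint : ∀ i j : Fin n, Integrable (fun s => τ s i * τ s j) μ := by
      intro i j
      refine (integrable_const (1:ℝ)).mono' ((hco i).mul (hco j)).aestronglyMeasurable ?_
      filter_upwards [hae1] with s hs
      rw [Real.norm_eq_abs, abs_mul]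
      calc |τ s i| * |τ s j| ≤ ‖τ s‖ * ‖τ s‖ :=
            mul_le_mul (habs _ _) (habs _ _) (abs_nonneg _) (norm_nonneg _)
      _ = 1 := by rw [hs, one_mul]
    have hval : ∫ z, (inner ℝ (τ z.1) (τ z.2)) ^ 2 ∂ν = ∑ i, ∑ j, B i j ^ 2 := by
      rw [hνdef, integral_prod _ (hνdef ▸ hh2int)]
      have inner_exp : ∀ s t : ℝ, (inner ℝ (τ s) (τ t)) ^ 2
          = ∑ i, ∑ j, (τ s i * τ s j) * (τ t i * τ t j) := by
        intro s t
        rw [hinner, sq, Finset.sum_mul_sum]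
        exact Finset.sum_congr rfl fun i _ => Finset.sum_congr rfl fun j _ => by ring
      have inner_int : ∀ s : ℝ, ∫ t, (inner ℝ (τ s) (τ t)) ^ 2 ∂μ
          = ∑ i, ∑ j, (τ s i * τ s j) * B i j := by
        intro s
        simp_rw [inner_exp]
        rw [integral_finset_sum _ (fun i _ =>
          integrable_finset_sum _ fun j _ => (hijint i j).const_mul _)]
        refine Finset.sum_congr rfl fun i _ => ?_
        rw [integral_finset_sum _ (fun j _ => (hijint i j).const_mul _)]
        exact Finset.sum_congr rfl fun j _ => integral_const_mul _ _
      simp_rw [inner_int]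
      rw [integral_finset_sum _ (fun i _ =>
        integrable_finset_sum _ fun j _ => (hijint i j).mul_const _)]
      refine Finset.sum_congr rfl fun i _ => ?_
      rw [integral_finset_sum _ (fun j _ => (hijint i j).mul_const _)]
      refine Finset.sum_congr rfl fun j _ => ?_
      rw [integral_mul_const]
      exact (sq (B i j)).symm
    rw [hval]
    have htr : ∑ i, B i i = L := by
      show ∑ i, (∫ s, τ s i * τ s i ∂μ) = L
      rw [← integral_finset_sum _ (fun i _ => hijint i i)]
      have hone : ∀ᵐ s ∂μ, (∑ i, τ s i * τ s i) = 1 := by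
        filter_upwards [hae1] with s hs
        rw [← hinner, real_inner_self_eq_norm_sq, hs, one_pow]
      rw [integral_congr_ae hone, integral_const, smul_eq_mul, measureReal_def, hμL, mul_one]
    have h1 : ∑ i, B i i ^ 2 ≤ ∑ i, ∑ j, B i j ^ 2 :=
      Finset.sum_le_sum fun i _ => Finset.single_le_sum
        (f := fun j => B i j ^ 2) (fun j _ => sq_nonneg _) (Finset.mem_univ i)
    refine le_trans ?_ h1
    have hcs := sq_sum_le_card_mul_sum_sq (s := (Finset.univ : Finset (Fin n)))
      (f := fun i => B i i)
    rw [htr, Finset.card_univ, Fintype.card_fin] at hcs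
    rw [div_le_iff₀ hn0]
    calc L ^ 2 ≤ (n : ℝ) * ∑ i, B i i ^ 2 := hcs
    _ = (∑ i, B i i ^ 2) * n := by ring
  -- Step B2 : second moment
  have hptwise2 : ∀ᵐ z : ℝ × ℝ ∂ν,
      ‖τ z.1 - τ z.2‖ ^ (2:ℝ) = 2 - 2 * (inner ℝ (τ z.1) (τ z.2)) := by
    filter_upwards [haeprod] with z hz
    rw [show (2:ℝ) = ((2:ℕ):ℝ) by norm_num, Real.rpow_natCast, norm_sub_sq_real, hz.1, hz.2]
    ring
  have hB2 : ∫ z, ‖τ z.1 - τ z.2‖ ^ (2:ℝ) ∂ν = 2 * L ^ 2 := by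
    rw [integral_congr_ae hptwise2, integral_sub (integrable_const _) (hhint.const_mul _),
      integral_const_mul, hA, integral_const, smul_eq_mul, measureReal_def, hνL]
    ring
  -- Step B4 : fourth moment
  have hptwise4 : ∀ᵐ z : ℝ × ℝ ∂ν, ‖τ z.1 - τ z.2‖ ^ (4:ℝ)
      = 4 - 8 * (inner ℝ (τ z.1) (τ z.2)) + 4 * (inner ℝ (τ z.1) (τ z.2)) ^ 2 := by
    filter_upwards [haeprod] with z hz
    have h2 : ‖τ z.1 - τ z.2‖ ^ (2:ℕ) = 2 - 2 * (inner ℝ (τ z.1) (τ z.2)) := by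
      rw [norm_sub_sq_real, hz.1, hz.2]; ring
    rw [show (4:ℝ) = ((4:ℕ):ℝ) by norm_num, Real.rpow_natCast,
      show (4:ℕ) = 2 * 2 from rfl, pow_mul, h2]
    ring
  have hB4 : 4 * (1 + 1 / (n:ℝ)) * L ^ 2 ≤ ∫ z, ‖τ z.1 - τ z.2‖ ^ (4:ℝ) ∂ν := by
    have i1 : Integrable (fun z : ℝ × ℝ => 4 - 8 * (inner ℝ (τ z.1) (τ z.2))) ν :=
      (integrable_const (4:ℝ)).sub (hhint.const_mul 8)
    have i2 : Integrable (fun z : ℝ × ℝ => 4 * (inner ℝ (τ z.1) (τ z.2)) ^ 2) ν :=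
      hh2int.const_mul 4
    rw [integral_congr_ae hptwise4, integral_add i1 i2,
      integral_sub (integrable_const _) (hhint.const_mul _),
      integral_const_mul, integral_const_mul, hA, integral_const, smul_eq_mul, measureReal_def, hνL]
    have h4 : 4 * (L ^ 2 / n) ≤ 4 * ∫ z, (inner ℝ (τ z.1) (τ z.2)) ^ 2 ∂ν := by
      linarith [hC]
    rw [div_eq_mul_inv] at h4
    have : 4 * (1 + 1 / (n:ℝ)) * L ^ 2 = L ^ 2 * 4 - 8 * 0 + 4 * (L ^ 2 * (n:ℝ)⁻¹) := by
      field_simp; ring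
    linarith [h4]
  -- Hölder and conclusion
  have hsub_meas : Measurable fun z : ℝ × ℝ => ‖τ z.1 - τ z.2‖ :=
    ((hmeas.comp measurable_fst).sub (hmeas.comp measurable_snd)).norm
  have hGbd : ∀ᵐ z : ℝ × ℝ ∂ν, ‖τ z.1 - τ z.2‖ ≤ 2 := by
    filter_upwards [haeprod] with z hz
    calc ‖τ z.1 - τ z.2‖ ≤ ‖τ z.1‖ + ‖τ z.2‖ := norm_sub_le _ _
    _ = 2 := by rw [hz.1, hz.2]; norm_num
  have hmemq : ∀ (q : ℝ), 0 ≤ q → ∀ (c : ENNReal),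
      MemLp (fun z : ℝ × ℝ => ‖τ z.1 - τ z.2‖ ^ q) c ν := by
    intro q hq c
    refine MemLp.of_bound ?_ (2 ^ q) ?_
    · exact ((Real.continuous_rpow_const hq).measurable.comp hsub_meas).aestronglyMeasurable
    · filter_upwards [hGbd] with z hz
      rw [Real.norm_eq_abs, abs_of_nonneg (Real.rpow_nonneg (norm_nonneg _) _)]
      exact Real.rpow_le_rpow (norm_nonneg _) hz hq
  set r : ℝ := (p - 2) / (p - 4) with hrdef
  set r' : ℝ := (p - 2) / 2 with hr'def
  have hp2 : (0:ℝ) < p - 2 := by linarith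
  have hp4 : (0:ℝ) < p - 4 := by linarith
  have h2ne : p - 2 ≠ 0 := hp2.ne'
  have h4ne : p - 4 ≠ 0 := hp4.ne'
  have hrpos : 0 < r := by rw [hrdef]; positivity
  have hr'pos : 0 < r' := by rw [hr'def]; positivity
  have hconj : Real.HolderConjugate r r' := by
    rw [Real.holderConjugate_iff]; constructor
    · rw [hrdef, lt_div_iff₀ hp4]; linarith
    · rw [hrdef, hr'def, inv_div, inv_div, ← add_div, div_eq_one_iff_eq h2ne]; ring
  have hfnn : 0 ≤ᵐ[ν] fun z : ℝ × ℝ => ‖τ z.1 - τ z.2‖ ^ ((2:ℝ)/r) :=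
    Filter.Eventually.of_forall fun z => Real.rpow_nonneg (norm_nonneg _) _
  have hgnn : 0 ≤ᵐ[ν] fun z : ℝ × ℝ => ‖τ z.1 - τ z.2‖ ^ (p/r') :=
    Filter.Eventually.of_forall fun z => Real.rpow_nonneg (norm_nonneg _) _
  have holder := integral_mul_le_Lp_mul_Lq_of_nonneg (μ := ν) hconj hfnn hgnn
    (hmemq _ (by positivity) _) (hmemq _ (by positivity) _)
  have hsum4 : (2:ℝ)/r + p/r' = 4 := by
    rw [hrdef, hr'def, div_div_eq_mul_div, div_div_eq_mul_div, ← add_div]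
    field_simp [h2ne]
    ring
  have e1 : ∀ z : ℝ × ℝ, ‖τ z.1 - τ z.2‖ ^ ((2:ℝ)/r) * ‖τ z.1 - τ z.2‖ ^ (p/r')
      = ‖τ z.1 - τ z.2‖ ^ (4:ℝ) := by
    intro z
    rw [← Real.rpow_add' (norm_nonneg _) (by rw [hsum4]; norm_num), hsum4]
  have e2 : ∀ z : ℝ × ℝ, (‖τ z.1 - τ z.2‖ ^ ((2:ℝ)/r)) ^ r = ‖τ z.1 - τ z.2‖ ^ (2:ℝ) := by
    intro z
    rw [← Real.rpow_mul (norm_nonneg _), div_mul_cancel₀ _ hrpos.ne']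
  have e3 : ∀ z : ℝ × ℝ, (‖τ z.1 - τ z.2‖ ^ (p/r')) ^ r' = ‖τ z.1 - τ z.2‖ ^ p := by
    intro z
    rw [← Real.rpow_mul (norm_nonneg _), div_mul_cancel₀ _ hr'pos.ne']
  simp only [e1, e2, e3] at holder
  set C : ℝ := ∫ z, ‖τ z.1 - τ z.2‖ ^ p ∂ν with hCdef
  have hCnn : 0 ≤ C := integral_nonneg fun z => Real.rpow_nonneg (norm_nonneg _) _
  rw [hB2] at holder
  have hD0 : (0:ℝ) < 4 * (1 + 1/(n:ℝ)) * L ^ 2 := by positivity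
  have step1 : (4 * (1 + 1/(n:ℝ)) * L ^ 2) ^ r' ≤ ((2 * L ^ 2) ^ (1/r) * C ^ (1/r')) ^ r' :=
    Real.rpow_le_rpow hD0.le (le_trans hB4 holder) hr'pos.le
  have hMpos : (0:ℝ) < L ^ 2 := by positivity
  have step2 : ((2 * L ^ 2) ^ ((1:ℝ)/r) * C ^ ((1:ℝ)/r')) ^ r'
      = (2 * L ^ 2) ^ ((p-4)/2) * C := by
    rw [Real.mul_rpow (Real.rpow_nonneg (by positivity) _) (Real.rpow_nonneg hCnn _),
      ← Real.rpow_mul (by positivity : (0:ℝ) ≤ 2 * L ^ 2), ← Real.rpow_mul hCnn,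
      show (1:ℝ)/r * r' = (p-4)/2 by
        rw [hrdef, hr'def]; field_simp,
      show (1:ℝ)/r' * r' = 1 by field_simp [hr'pos.ne'],
      Real.rpow_one]
  have key : (4 * (1 + 1/(n:ℝ)) * L ^ 2) ^ r' ≤ (2 * L ^ 2) ^ ((p-4)/2) * C :=
    step2 ▸ step1
  have hpint : Integrable (fun z : ℝ × ℝ => ‖τ z.1 - τ z.2‖ ^ p) ν :=
    memLp_one_iff_integrable.mp (hmemq p (by linarith) 1)
  have hiter : C = ∫ s, ∫ t, ‖τ s - τ t‖ ^ p ∂μ ∂μ := by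
    rw [hCdef, hνdef]
    exact integral_prod _ (hνdef ▸ hpint)
  rw [← hiter]
  have hpow_pos : (0:ℝ) < (2 * L ^ 2) ^ ((p-4)/2) := Real.rpow_pos_of_pos (by positivity) _
  rw [← mul_le_mul_iff_of_pos_left hpow_pos]
  refine le_trans (le_of_eq ?_) key
  rw [hr'def]
  have hc : (0:ℝ) < 1 + 1/(n:ℝ) := by positivity
  rw [Real.mul_rpow (by positivity : (0:ℝ) ≤ 4 * (1 + 1/(n:ℝ))) hMpos.le,
    Real.mul_rpow (by norm_num : (0:ℝ) ≤ 4) hc.le,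
    Real.mul_rpow (by norm_num : (0:ℝ) ≤ 2) hMpos.le]
  have h4 : (4:ℝ) ^ ((p-2)/2) = 2 ^ (p-2) := by
    rw [show (4:ℝ) = 2 ^ (2:ℝ) by
        rw [show (2:ℝ) = ((2:ℕ):ℝ) from by norm_num]
        rw [Real.rpow_natCast]; norm_num,
      ← Real.rpow_mul (by norm_num : (0:ℝ) ≤ 2)]
    congr 1; ring
  have h2 : (2:ℝ) ^ ((p-4)/2) * 2 ^ (p/2) = 2 ^ (p-2) := by
    rw [← Real.rpow_add (by norm_num : (0:ℝ) < 2)]; congr 1; ring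
  have hcc : (1 + 1/(n:ℝ)) ^ (p/2 - 1) = (1 + 1/(n:ℝ)) ^ ((p-2)/2) := by congr 1; ring
  have hMM : (L ^ 2 : ℝ) ^ ((p-4)/2) * L ^ 2 = (L ^ 2 : ℝ) ^ ((p-2)/2) := by
    nth_rewrite 2 [show (L ^ 2 : ℝ) = (L ^ 2 : ℝ) ^ (1:ℝ) from (Real.rpow_one _).symm]
    rw [← Real.rpow_add hMpos]; congr 1; ring
  rw [hcc, h4, ← h2, ← hMM]
  ring
end
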